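/- arXiv:2508.08208 — 5 statements merged into one kernel-verified Lean document; each statement's English description precedes it below -/
import Mathlib

section
/- Let (μ, σ) be a medium with C_{μ,σ}(p) ≠ 0 for some p ∈ ℝ^n (i.e., the medium is nontrivial). Then the 1-dimensional Hausdorff measure (Euclidean metric) of the support of μ satisfies H^1(supp(μ) ∩ [0,1)^n) ≥ 1/1000. -/
open MeasureTheory Filter Topology
open scoped RealInnerProductSpace

noncomputable section

/-- `ℝⁿ` with the Euclidean metric. -/
abbrev Rn (n : ℕ) : Type := EuclideanSpace ℝ (Fin n)

/-- The `n`-torus, the `n`-fold product of the additive circle `ℝ/ℤ`. -/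
abbrev Tn (n : ℕ) : Type := Fin n → AddCircle (1 : ℝ)

/-- The lattice vector of `ℝⁿ` corresponding to `v ∈ ℤⁿ`. -/
def latVec {n : ℕ} (v : Fin n → ℤ) : Rn n := WithLp.toLp 2 (fun i => (v i : ℝ))

/-- The quotient map `π : ℝⁿ → Tⁿ`. -/
def torusProj (n : ℕ) : Rn n → Tn n := fun x i => (x i : AddCircle (1 : ℝ))

/-- The half-open unit cube `[0,1)ⁿ`. -/
def unitCube (n : ℕ) : Set (Rn n) := {x | ∀ i, x i ∈ Set.Ico (0 : ℝ) 1}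

/-- A test function: smooth and `ℤⁿ`-periodic. -/
def IsTestFun {n : ℕ} (φ : Rn n → ℝ) : Prop :=
  ContDiff ℝ (⊤ : ℕ∞) φ ∧ ∀ (x : Rn n) (v : Fin n → ℤ), φ (x + latVec v) = φ x

/-- The quadratic form `v ⬝ A v` of a matrix `A`. -/
def qf {n : ℕ} (A : Matrix (Fin n) (Fin n) ℝ) (v : Rn n) : ℝ :=
  ∑ i, ∑ j, v i * A i j * v j

/-- The Dirichlet energy of a test function `φ` with slope `p` in the medium `(μ, σ)`. -/
def energy {n : ℕ} (μ : Measure (Rn n)) (σ : Rn n → Matrix (Fin n) (Fin n) ℝ)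
    (φ : Rn n → ℝ) (p : Rn n) : ℝ :=
  ∫ x in unitCube n, qf (σ x) (gradient φ x + p) ∂μ

/-- The effective conductance `C_{μ,σ}(p)` of a medium. -/
def effC {n : ℕ} (μ : Measure (Rn n)) (σ : Rn n → Matrix (Fin n) (Fin n) ℝ)
    (p : Rn n) : ℝ :=
  sInf {c | ∃ φ : Rn n → ℝ, IsTestFun φ ∧ c = energy μ σ φ p}

/-- A medium in periodic encoding. -/
structure IsMedium {n : ℕ} (μ : Measure (Rn n))
    (σ : Rn n → Matrix (Fin n) (Fin n) ℝ) : Prop where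
  invariant : ∀ v : Fin n → ℤ, μ.map (· + latVec v) = μ
  finiteCube : μ (unitCube n) < ⊤
  meas : ∀ i j, Measurable fun x => σ x i j
  periodic : ∀ (x : Rn n) (v : Fin n → ℤ), σ (x + latVec v) = σ x
  symm : ∀ x, (σ x).IsSymm
  posSemidef : ∀ᵐ x ∂μ, (σ x).PosSemidef
  traceOne : ∀ᵐ x ∂μ, (σ x).trace = 1

/-- The support of a Borel measure: the set of points all of whose
open neighborhoods have positive measure. -/
def msupport {α : Type*} [TopologicalSpace α] [MeasurableSpace α] (μ : Measure α) :
    Set α :=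
  {x | ∀ U : Set α, IsOpen U → x ∈ U → 0 < μ U}

/-- The pushforward to the torus of the restriction of `μ` to the unit cube. -/
def torusMeasure {n : ℕ} (μ : Measure (Rn n)) : Measure (Tn n) :=
  (μ.restrict (unitCube n)).map (torusProj n)

/-- The set of homotopy classes of closed loops lying in a periodic set `Γ ⊆ ℝⁿ`. -/
def homotopySet {n : ℕ} (Γ : Set (Rn n)) : Set (Fin n → ℤ) :=
  {v | ∃ γ : ℝ → Rn n, ContinuousOn γ (Set.Icc 0 1) ∧
    (∀ t ∈ Set.Icc (0 : ℝ) 1, γ t ∈ Γ) ∧ γ 1 = γ 0 + latVec v}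

/-- The set of homotopy classes of closed loops lying in a subset `E` of the torus. -/
def homotopySetT {n : ℕ} (E : Set (Tn n)) : Set (Fin n → ℤ) :=
  {v | ∃ γ : ℝ → Rn n, ContinuousOn γ (Set.Icc 0 1) ∧
    (∀ t ∈ Set.Icc (0 : ℝ) 1, torusProj n (γ t) ∈ E) ∧ γ 1 = γ 0 + latVec v}

/-- The Dirichlet energy of a test function on a coercive periodic network `(Γ, a)`. -/
def netEnergy {n : ℕ} (Γ : Set (Rn n)) (a : Rn n → ℝ) (φ : Rn n → ℝ) (p : Rn n) : ℝ :=
  ∫ x in Γ ∩ unitCube n, ‖gradient φ x + p‖ ^ 2 * a x ∂μH[1]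

/-- The effective conductance `C(p)` of a coercive periodic network `(Γ, a)`. -/
def netC {n : ℕ} (Γ : Set (Rn n)) (a : Rn n → ℝ) (p : Rn n) : ℝ :=
  sInf {c | ∃ φ : Rn n → ℝ, IsTestFun φ ∧ c = netEnergy Γ a φ p}


namespace Statement5Aux

open Real
open scoped ENNReal NNReal

lemma abs_apply_le_norm {n : ℕ} (x : Rn n) (i : Fin n) : |x i| ≤ ‖x‖ := by
  rw [EuclideanSpace.norm_eq, ← Real.sqrt_sq_eq_abs]
  apply Real.sqrt_le_sqrt
  have := Finset.single_le_sum (f := fun j => ‖x j‖ ^ 2) (fun j _ => sq_nonneg _)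
    (Finset.mem_univ i)
  simpa [Real.norm_eq_abs, sq_abs] using this

lemma isClosed_msupport {α : Type*} [TopologicalSpace α] [MeasurableSpace α] (μ : Measure α) :
    IsClosed (msupport μ) := by
  rw [← isOpen_compl_iff, isOpen_iff_forall_mem_open]
  intro x hx
  simp only [msupport, Set.mem_compl_iff, Set.mem_setOf_eq, not_forall] at hx
  obtain ⟨U, hUo, hxU, hU⟩ := hx
  refine ⟨U, fun y hy => ?_, hUo, hxU⟩
  simp only [Set.mem_compl_iff, msupport, Set.mem_setOf_eq, not_forall]
  exact ⟨U, hUo, hy, hU⟩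

lemma msupport_compl_null {α : Type*} [TopologicalSpace α] [MeasurableSpace α]
    [SecondCountableTopology α] (μ : Measure α) : μ (msupport μ)ᶜ = 0 := by
  apply measure_null_of_locally_null
  intro x hx
  simp only [msupport, Set.mem_compl_iff, Set.mem_setOf_eq, not_forall] at hx
  obtain ⟨U, hUo, hxU, hU⟩ := hx
  exact ⟨U, mem_nhdsWithin_of_mem_nhds (hUo.mem_nhds hxU), nonpos_iff_eq_zero.1 (not_lt.1 hU)⟩

lemma msupport_translate {n : ℕ} {μ : Measure (Rn n)}
    (hinv : ∀ v : Fin n → ℤ, μ.map (· + latVec v) = μ) (v : Fin n → ℤ)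
    {x : Rn n} (hx : x ∈ msupport μ) : x + latVec v ∈ msupport μ := by
  intro U hUo hxU
  have hmeas : Measurable (fun y : Rn n => y + latVec v) := measurable_add_const _
  have hμ : μ U = μ ((fun y : Rn n => y + latVec v) ⁻¹' U) := by
    conv_lhs => rw [← hinv v]
    exact Measure.map_apply hmeas hUo.measurableSet
  rw [hμ]
  exact hx _ (hUo.preimage (continuous_add_right _)) hxU

lemma fract_mem {n : ℕ} {μ : Measure (Rn n)}
    (hinv : ∀ v : Fin n → ℤ, μ.map (· + latVec v) = μ)
    {y : Rn n} (hy : y ∈ msupport μ) :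
    (WithLp.toLp 2 (fun i => Int.fract (y i)) : Rn n) ∈ msupport μ ∩ unitCube n := by
  constructor
  · have h := msupport_translate hinv (fun i => -⌊y i⌋) hy
    have he : (WithLp.toLp 2 (fun i => Int.fract (y i)) : Rn n) = y + latVec (fun i => -⌊y i⌋) := by
      ext i
      simp [latVec, Int.fract, PiLp.add_apply, sub_eq_add_neg]
    rwa [he]
  · intro i
    exact ⟨Int.fract_nonneg _, Int.fract_lt_one _⟩

lemma slab {n : ℕ} (μ : Measure (Rn n))
    (hinv : ∀ v : Fin n → ℤ, μ.map (· + latVec v) = μ)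
    (hH : μH[1] (msupport μ ∩ unitCube n) < ENNReal.ofReal (1/1000)) (i : Fin n) :
    ∃ t ε : ℝ, 0 < ε ∧ ε ≤ t ∧ ε ≤ 1 - t ∧
      ∀ y ∈ msupport μ, Int.fract (y i) ≤ t - ε ∨ t + ε ≤ Int.fract (y i) := by
  classical
  set A := msupport μ ∩ unitCube n with hA
  have lipproj : ∀ c : ℝ, LipschitzWith 1 (fun x : Rn n => x i + c) := by
    intro c
    apply LipschitzWith.of_dist_le_mul
    intro x y
    rw [NNReal.coe_one, one_mul, Real.dist_eq, dist_eq_norm]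
    have he : x i + c - (y i + c) = (x - y) i := by simp [PiLp.sub_apply]
    rw [he]
    exact abs_apply_le_norm _ i
  have himg : ∀ c : ℝ, volume ((fun x : Rn n => x i + c) '' A) < ENNReal.ofReal (1/1000) := by
    intro c
    have h := (lipproj c).hausdorffMeasure_image_le (le_of_lt one_pos) A
    rw [← MeasureTheory.hausdorffMeasure_real]
    refine lt_of_le_of_lt (h.trans_eq ?_) hH
    simp
  -- the closed cube and compactness
  set K := {x : Rn n | ∀ j, x j ∈ Set.Icc (0:ℝ) 1} with hK
  have hprojcont : ∀ j : Fin n, Continuous (fun x : Rn n => x j) := by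
    intro j
    exact (EuclideanSpace.proj (𝕜 := ℝ) j).continuous
  have hKclosed : IsClosed K := by
    have he : K = ⋂ j, (fun x : Rn n => x j) ⁻¹' Set.Icc (0:ℝ) 1 := by
      ext x; simp [hK, Set.mem_iInter]
    rw [he]
    exact isClosed_iInter fun j => isClosed_Icc.preimage (hprojcont j)
  have hKbdd : Bornology.IsBounded K := by
    rw [isBounded_iff_forall_norm_le]
    refine ⟨Real.sqrt n, fun x hx => ?_⟩
    rw [EuclideanSpace.norm_eq]
    apply Real.sqrt_le_sqrt
    calc ∑ j, ‖x j‖^2 ≤ ∑ _j : Fin n, (1:ℝ) := by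
          apply Finset.sum_le_sum
          intro j _
          have h1 := (hx j).1
          have h2 := (hx j).2
          rw [Real.norm_eq_abs]
          nlinarith [abs_nonneg (x j), abs_le.2 ⟨by linarith, h2⟩]
      _ = (n : ℝ) := by simp
  have hcompact : IsCompact (msupport μ ∩ K) :=
    Metric.isCompact_of_isClosed_isBounded ((isClosed_msupport μ).inter hKclosed)
      (hKbdd.subset Set.inter_subset_right)
  have hQcpt : IsCompact ((fun x : Rn n => x i) '' (msupport μ ∩ K)) :=
    hcompact.image (hprojcont i)
  have hsub : (fun x : Rn n => x i) '' (msupport μ ∩ K) ⊆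
      ((fun x : Rn n => x i + 0) '' A) ∪ ((fun x : Rn n => x i + 1) '' A) := by
    rintro s ⟨x, ⟨hxs, hxK⟩, rfl⟩
    have hz := fract_mem hinv hxs
    have h01 : x i ∈ Set.Icc (0:ℝ) 1 := hxK i
    rcases lt_or_eq_of_le h01.2 with hlt | heq
    · left
      refine ⟨_, hz, ?_⟩
      show Int.fract (x i) + 0 = x i
      rw [add_zero]
      exact Int.fract_eq_self.2 ⟨h01.1, hlt⟩
    · right
      refine ⟨_, hz, ?_⟩
      show Int.fract (x i) + 1 = x i
      rw [heq]
      norm_num [Int.fract_one]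
  set Q : Set ℝ := ((fun x : Rn n => x i) '' (msupport μ ∩ K)) ∪ {0, 1} with hQ
  have hQclosed : IsClosed Q :=
    hQcpt.isClosed.union (Set.Finite.isClosed ((Set.finite_singleton (1:ℝ)).insert 0))
  have hQvol : volume Q < 1 := by
    have h2 : volume ({0, 1} : Set ℝ) = 0 :=
      Set.Finite.measure_zero ((Set.finite_singleton (1:ℝ)).insert 0) _
    calc volume Q ≤ volume ((fun x : Rn n => x i) '' (msupport μ ∩ K))
          + volume ({0, 1} : Set ℝ) := measure_union_le _ _
      _ = volume ((fun x : Rn n => x i) '' (msupport μ ∩ K)) := by rw [h2, add_zero]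
      _ ≤ volume (((fun x : Rn n => x i + 0) '' A) ∪ ((fun x : Rn n => x i + 1) '' A)) :=
          measure_mono hsub
      _ ≤ volume ((fun x : Rn n => x i + 0) '' A) + volume ((fun x : Rn n => x i + 1) '' A) :=
          measure_union_le _ _
      _ < ENNReal.ofReal (1/1000) + ENNReal.ofReal (1/1000) :=
          ENNReal.add_lt_add (himg 0) (himg 1)
      _ < 1 := by
          rw [← ENNReal.ofReal_add (by norm_num) (by norm_num)]
          rw [show (1 : ℝ≥0∞) = ENNReal.ofReal 1 by simp]
          exact (ENNReal.ofReal_lt_ofReal_iff_of_nonneg (by norm_num)).2 (by norm_num)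
  have hnsub : ¬ (Set.Icc (0:ℝ) 1 ⊆ Q) := by
    intro hsubset
    have : volume (Set.Icc (0:ℝ) 1) ≤ volume Q := measure_mono hsubset
    rw [Real.volume_Icc] at this
    simp only [sub_zero, ENNReal.ofReal_one] at this
    exact absurd (lt_of_le_of_lt this hQvol) (lt_irrefl _)
  obtain ⟨t, htIcc, htQ⟩ := Set.not_subset.1 hnsub
  obtain ⟨ε, hε, hball⟩ := Metric.isOpen_iff.1 hQclosed.isOpen_compl t htQ
  have h0Q : (0:ℝ) ∈ Q := by right; left; rfl
  have h1Q : (1:ℝ) ∈ Q := by right; right; rfl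
  have hεt : ε ≤ t := by
    by_contra h
    push_neg at h
    have : (0:ℝ) ∈ Metric.ball t ε := by
      rw [Metric.mem_ball, Real.dist_eq]
      rw [abs_of_nonpos (by linarith [htIcc.1])]
      linarith [htIcc.1]
    exact (hball this) h0Q
  have hεt' : ε ≤ 1 - t := by
    by_contra h
    push_neg at h
    have : (1:ℝ) ∈ Metric.ball t ε := by
      rw [Metric.mem_ball, Real.dist_eq]
      rw [abs_of_nonneg (by linarith [htIcc.2])]
      linarith [htIcc.2]
    exact (hball this) h1Q
  refine ⟨t, ε, hε, hεt, hεt', ?_⟩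
  intro y hy
  have hz := fract_mem hinv hy
  have hzQ : Int.fract (y i) ∈ Q := by
    left
    refine ⟨_, ⟨hz.1, fun j => ⟨(hz.2 j).1, le_of_lt (hz.2 j).2⟩⟩, rfl⟩
  have : Int.fract (y i) ∉ Metric.ball t ε := fun h => (hball h) hzQ
  rw [Metric.mem_ball, Real.dist_eq, not_lt] at this
  rcases abs_cases (Int.fract (y i) - t) with ⟨he, _⟩ | ⟨he, _⟩
  · right; linarith [he ▸ this]
  · left; linarith [he ▸ this]


lemma slab_cos {n : ℕ} (μ : Measure (Rn n))
    (hinv : ∀ v : Fin n → ℤ, μ.map (· + latVec v) = μ)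
    (hH : μH[1] (msupport μ ∩ unitCube n) < ENNReal.ofReal (1/1000)) (i : Fin n) :
    ∃ t η : ℝ, 0 < η ∧ η ≤ 2 ∧
      ∀ y ∈ msupport μ, Real.cos (2*π*(y i - t)) ≤ 1 - η := by
  obtain ⟨t, ε, hε, hεt, hεt', havoid⟩ := slab μ hinv hH i
  have hε2 : ε ≤ 1/2 := by linarith
  have hπ := Real.pi_pos
  refine ⟨t, 1 - Real.cos (2*π*ε), ?_, ?_, ?_⟩
  · have h := Real.cos_lt_cos_of_nonneg_of_le_pi le_rfl (by nlinarith) (by nlinarith :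
      (0:ℝ) < 2*π*ε)
    rw [Real.cos_zero] at h
    linarith
  · linarith [Real.neg_one_le_cos (2*π*ε)]
  · intro y hy
    have hf := havoid y hy
    have hfr0 := Int.fract_nonneg (y i)
    have hfr1 := Int.fract_lt_one (y i)
    have key : ε ≤ Int.fract (y i - t) ∧ Int.fract (y i - t) ≤ 1 - ε := by
      have he : y i - t = (Int.fract (y i) - t) + (⌊y i⌋ : ℤ) := by
        rw [Int.fract]; ring
      rw [he, Int.fract_add_intCast]
      rcases hf with h | h
      · have h1l : (0:ℝ) ≤ Int.fract (y i) - t + 1 := by linarith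
        have h1r : Int.fract (y i) - t + 1 < 1 := by linarith
        have heq : Int.fract (Int.fract (y i) - t) = Int.fract (y i) - t + 1 := by
          calc Int.fract (Int.fract (y i) - t)
              = Int.fract ((Int.fract (y i) - t + 1) + ((-1 : ℤ) : ℝ)) := by norm_num
            _ = Int.fract (Int.fract (y i) - t + 1) := Int.fract_add_intCast _ _
            _ = Int.fract (y i) - t + 1 := Int.fract_eq_self.2 ⟨h1l, h1r⟩
        rw [heq]
        constructor <;> linarith
      · have h1l : (0:ℝ) ≤ Int.fract (y i) - t := by linarith
        have h1r : Int.fract (y i) - t < 1 := by linarith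
        rw [Int.fract_eq_self.2 ⟨h1l, h1r⟩]
        constructor <;> linarith
    have hper : Real.cos (2*π*(y i - t)) = Real.cos (2*π*Int.fract (y i - t)) := by
      have he : 2*π*(y i - t) = 2*π*Int.fract (y i - t) + (⌊y i - t⌋ : ℤ) * (2*π) := by
        rw [Int.fract]; ring
      rw [he, Real.cos_add_int_mul_two_pi]
    rw [hper]
    set v := Int.fract (y i - t) with hv
    rcases le_total v (1/2) with hv2 | hv2
    · have h := Real.cos_le_cos_of_nonneg_of_le_pi (by nlinarith : (0:ℝ) ≤ 2*π*ε)
        (by nlinarith : 2*π*v ≤ π) (by nlinarith [key.1] : 2*π*ε ≤ 2*π*v)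
      linarith
    · have heq : Real.cos (2*π*v) = Real.cos (2*π*(1-v)) := by
        rw [show 2*π*(1-v) = ((1:ℤ) : ℝ) * (2*π) - 2*π*v by push_cast; ring,
          Real.cos_int_mul_two_pi_sub]
      rw [heq]
      have h := Real.cos_le_cos_of_nonneg_of_le_pi (by nlinarith : (0:ℝ) ≤ 2*π*ε)
        (by nlinarith : 2*π*(1-v) ≤ π) (by nlinarith [key.2] : 2*π*ε ≤ 2*π*(1-v))
      linarith


/-! ### The analytic approximate sawtooth -/

def psi (r t s : ℝ) : ℝ :=
  (1/π) * (Complex.log (1 - (r:ℂ) * Complex.exp (((2*π*(s - t) : ℝ) : ℂ) * Complex.I))).im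

lemma w_re (r θ : ℝ) :
    ((1:ℂ) - (r:ℂ) * Complex.exp ((θ:ℂ) * Complex.I)).re = 1 - r * Real.cos θ := by
  simp [Complex.sub_re, Complex.mul_re, Complex.exp_ofReal_mul_I_re, Complex.exp_ofReal_mul_I_im]

lemma w_im (r θ : ℝ) :
    ((1:ℂ) - (r:ℂ) * Complex.exp ((θ:ℂ) * Complex.I)).im = -(r * Real.sin θ) := by
  simp [Complex.sub_im, Complex.mul_im, Complex.exp_ofReal_mul_I_re, Complex.exp_ofReal_mul_I_im]

lemma w_slit {r : ℝ} (hr0 : 0 ≤ r) (hr1 : r < 1) (θ : ℝ) :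
    ((1:ℂ) - (r:ℂ) * Complex.exp ((θ:ℂ) * Complex.I)) ∈ Complex.slitPlane := by
  rw [Complex.mem_slitPlane_iff]
  left
  rw [w_re]
  nlinarith [Real.cos_le_one θ, Real.neg_one_le_cos θ]

lemma psi_int_periodic (r t s : ℝ) (m : ℤ) : psi r t (s + m) = psi r t s := by
  unfold psi
  have he : Complex.exp (((2*π*(s + (m:ℝ) - t) : ℝ) : ℂ) * Complex.I)
      = Complex.exp (((2*π*(s - t) : ℝ) : ℂ) * Complex.I) := by
    rw [show (((2*π*(s + (m:ℝ) - t) : ℝ) : ℂ) * Complex.I)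
        = (((2*π*(s - t) : ℝ) : ℂ) * Complex.I) + (m:ℂ) * (2*(π:ℂ)*Complex.I) by
      push_cast; ring]
    rw [Complex.exp_add, Complex.exp_int_mul_two_pi_mul_I, mul_one]
  rw [he]

lemma psi_contDiff {r : ℝ} (hr0 : 0 ≤ r) (hr1 : r < 1) (t : ℝ) : ContDiff ℝ (⊤ : ℕ∞) (psi r t) := by
  apply AnalyticOnNhd.contDiff
  intro s _
  have h1 : AnalyticAt ℝ (fun s : ℝ => ((2*π*(s - t) : ℝ) : ℂ)) s := by
    apply (Complex.ofRealCLM.analyticAt _).comp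
    exact analyticAt_const.mul ((analyticAt_id).sub analyticAt_const)
  have h2 : AnalyticAt ℝ (fun s : ℝ => ((2*π*(s - t) : ℝ) : ℂ) * Complex.I) s :=
    h1.mul analyticAt_const
  have h3 : AnalyticAt ℝ (fun s : ℝ => Complex.exp (((2*π*(s - t) : ℝ) : ℂ) * Complex.I)) s :=
    (analyticAt_cexp.restrictScalars (𝕜 := ℝ)).comp h2
  have h4 : AnalyticAt ℝ
      (fun s : ℝ => (1:ℂ) - (r:ℂ) * Complex.exp (((2*π*(s - t) : ℝ) : ℂ) * Complex.I)) s :=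
    analyticAt_const.sub (analyticAt_const.mul h3)
  have h5 : AnalyticAt ℝ
      (fun s : ℝ => Complex.log
        ((1:ℂ) - (r:ℂ) * Complex.exp (((2*π*(s - t) : ℝ) : ℂ) * Complex.I))) s := by
    have hlog : AnalyticAt ℝ Complex.log
        ((fun s : ℝ => (1:ℂ) - (r:ℂ) * Complex.exp (((2*π*(s - t) : ℝ) : ℂ) * Complex.I)) s) :=
      (analyticAt_clog (w_slit hr0 hr1 (2*π*(s-t)))).restrictScalars (𝕜 := ℝ)
    exact AnalyticAt.comp (g := Complex.log)
      (f := fun s : ℝ => (1:ℂ) - (r:ℂ) * Complex.exp (((2*π*(s - t) : ℝ) : ℂ) * Complex.I))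
      hlog h4
  exact analyticAt_const.mul ((Complex.imCLM.analyticAt _).comp h5)

lemma psi_hasDerivAt {r : ℝ} (hr0 : 0 < r) (hr1 : r < 1) (t s : ℝ) :
    HasDerivAt (psi r t)
      (2*r*(r - Real.cos (2*π*(s-t))) / (1 - 2*r*Real.cos (2*π*(s-t)) + r^2)) s := by
  have hπ := Real.pi_pos
  have h1 : HasDerivAt (fun s : ℝ => 2*π*(s-t)) (2*π) s := by
    simpa using ((hasDerivAt_id s).sub_const t).const_mul (2*π)
  have h2 := h1.ofReal_comp
  have h3 := h2.mul_const Complex.I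
  have h4 := h3.cexp
  have h5 := (h4.const_mul (r:ℂ)).const_sub 1
  have hslit := w_slit hr0.le hr1 (2*π*(s-t))
  have h6 := h5.clog_real hslit
  have h7 := (Complex.imCLM.hasFDerivAt.comp_hasDerivAt s h6).const_mul (1/π)
  refine h7.congr_deriv (Eq.symm ?_)
  set θ := 2*π*(s-t) with hθ
  have hc1 := Real.cos_le_one θ
  have hc2 := Real.neg_one_le_cos θ
  have hD : 0 < 1 - 2*r*Real.cos θ + r^2 := by nlinarith
  have hpyth := Real.sin_sq_add_cos_sq θ
  have he_re := Complex.exp_ofReal_mul_I_re θ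
  have he_im := Complex.exp_ofReal_mul_I_im θ
  have hns : Complex.normSq ((1:ℂ) - (r:ℂ) * Complex.exp ((θ:ℂ) * Complex.I))
      = 1 - 2*r*Real.cos θ + r^2 := by
    rw [Complex.normSq_apply, w_re, w_im]
    nlinarith
  rw [show (Complex.imCLM ((-((r:ℂ) * (Complex.exp ((θ:ℂ) * Complex.I) * (((2*π:ℝ):ℂ) * Complex.I)))) / ((1:ℂ) - (r:ℂ) * Complex.exp ((θ:ℂ) * Complex.I)))) = ((-((r:ℂ) * (Complex.exp ((θ:ℂ) * Complex.I) * (((2*π:ℝ):ℂ) * Complex.I)))) / ((1:ℂ) - (r:ℂ) * Complex.exp ((θ:ℂ) * Complex.I))).im from rfl]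
  rw [Complex.div_im, hns, w_re, w_im]
  simp only [Complex.neg_re, Complex.neg_im, Complex.mul_re, Complex.mul_im,
    Complex.ofReal_re, Complex.ofReal_im, Complex.I_re, Complex.I_im, he_re, he_im]
  have hD' : (1 - 2*r*Real.cos θ + r^2) ≠ 0 := ne_of_gt hD
  field_simp
  linear_combination (-(2*π*r^2*(1 - 2*r*Real.cos θ + r^2)^2) + 2*π*r^3*(-4*Real.cos θ
    + 4*r*Real.cos θ^2 + 2*r - 4*r^2*Real.cos θ + r^3)) * hpyth


lemma psi_deriv_bound {δ η c r : ℝ} (hδ0 : 0 < δ) (hδ1 : δ ≤ 1) (hη0 : 0 < η) (hη2 : η ≤ 2)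
    (hc : c ≤ 1 - η) (hc' : -1 ≤ c) (hr : r = 1 - δ*η/4) :
    |2*r*(r - c) / (1 - 2*r*c + r^2) - 1| ≤ δ := by
  have hδη : 0 < δ * η := mul_pos hδ0 hη0
  have hδη2 : δ * η ≤ 2 := by nlinarith
  have h1r : 1 - r = δ*η/4 := by rw [hr]; ring
  have hr0 : 1/2 ≤ r := by linarith
  have hr1 : r < 1 := by linarith
  have hD : 0 < 1 - 2*r*c + r^2 := by
    nlinarith [sq_nonneg (1 - r), mul_nonneg (by linarith : (0:ℝ) ≤ 2*r)
      (by linarith : (0:ℝ) ≤ 1 - c)]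
  have hDη : 2*r*η ≤ 1 - 2*r*c + r^2 := by
    nlinarith [sq_nonneg (1 - r), mul_nonneg (by linarith : (0:ℝ) ≤ 2*r)
      (by linarith : (0:ℝ) ≤ 1 - η - c)]
  have heq : 2*r*(r - c) / (1 - 2*r*c + r^2) - 1 = (r^2 - 1) / (1 - 2*r*c + r^2) := by
    field_simp
    ring
  rw [heq, abs_div, abs_of_pos hD, abs_of_nonpos (by nlinarith : r^2 - 1 ≤ 0)]
  rw [div_le_iff₀ hD]
  have key : δ * (2*r*η) ≤ δ * (1 - 2*r*c + r^2) :=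
    mul_le_mul_of_nonneg_left hDη hδ0.le
  have h2 : (1-r)*(1+r) = δ*η/4*(1+r) := by rw [h1r]
  have h3 : δ*η/4*(1+r) ≤ δ*η/4*2 :=
    mul_le_mul_of_nonneg_left (by linarith : 1 + r ≤ 2) (by positivity)
  have hub : 1 - r^2 ≤ δ*η/2 := by nlinarith [h2, h3]
  nlinarith [key, hub, mul_nonneg (mul_nonneg hδ0.le hη0.le)
    (by linarith : (0:ℝ) ≤ 2*r - 1)]

/-! ### Quadratic form bounds -/

lemma qf_nonneg {n : ℕ} {A : Matrix (Fin n) (Fin n) ℝ} (hA : A.PosSemidef) (v : Rn n) :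
    0 ≤ qf A v := by
  have h := hA.dotProduct_mulVec_nonneg (fun i => v i)
  have he : qf A v = dotProduct (star (fun i => v i)) (A.mulVec (fun i => v i)) := by
    simp [qf, dotProduct, Matrix.mulVec, Finset.mul_sum, mul_assoc]
  rw [he]; exact h

lemma diag_nonneg {n : ℕ} {A : Matrix (Fin n) (Fin n) ℝ} (hA : A.PosSemidef) (k : Fin n) :
    0 ≤ A k k := by
  have h := hA.dotProduct_mulVec_nonneg (Pi.single k 1)
  simpa [Matrix.mulVec_single, single_dotProduct] using h

lemma entry_abs_le {n : ℕ} {A : Matrix (Fin n) (Fin n) ℝ} (hA : A.PosSemidef)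
    (htr : A.trace = 1) (i j : Fin n) : |A i j| ≤ 1 := by
  have hdiag : ∀ k, A k k ≤ 1 := by
    intro k
    have h := Finset.single_le_sum (f := fun l => A l l)
      (fun l _ => diag_nonneg hA l) (Finset.mem_univ k)
    have htr' : ∑ l, A l l = 1 := htr
    linarith
  have hsymm : A j i = A i j := by
    have h := hA.1
    have := congrFun (congrFun h i) j
    simpa [Matrix.conjTranspose_apply] using this
  have hexp : ∀ ε : ℝ, (0:ℝ) ≤ A i i + ε * A i j + ε * A j i + ε^2 * A j j := by
    intro ε
    have h := hA.dotProduct_mulVec_nonneg (Pi.single (M := fun _ => ℝ) i 1 + ε • Pi.single (M := fun _ => ℝ) j 1)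
    have he : dotProduct
        (star (Pi.single (M := fun _ => ℝ) i 1 + ε • Pi.single (M := fun _ => ℝ) j 1))
        (A.mulVec (Pi.single (M := fun _ => ℝ) i 1 + ε • Pi.single (M := fun _ => ℝ) j 1))
        = A i i + ε * A i j + ε * A j i + ε^2 * A j j := by
      simp [Matrix.mulVec_add, dotProduct_add, add_dotProduct,
        Matrix.mulVec_smul, smul_dotProduct, dotProduct_smul,
        Matrix.mulVec_single, single_dotProduct, smul_eq_mul]
      ring
    rw [he] at h
    exact h
  have h1 := hexp 1
  have h2 := hexp (-1)
  rw [hsymm] at h1 h2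
  have hii := hdiag i
  have hjj := hdiag j
  have hii0 := diag_nonneg hA i
  have hjj0 := diag_nonneg hA j
  rw [abs_le]
  constructor <;> nlinarith

lemma qf_abs_le {n : ℕ} {A : Matrix (Fin n) (Fin n) ℝ} (hA : A.PosSemidef) (htr : A.trace = 1)
    {v : Rn n} {κ : ℝ} (hκ : 0 ≤ κ) (hv : ∀ i, |v i| ≤ κ) :
    |qf A v| ≤ (n:ℝ)^2 * κ^2 := by
  have h1 : |qf A v| ≤ ∑ i, ∑ j, |v i| * |A i j| * |v j| := by
    rw [qf]
    refine (Finset.abs_sum_le_sum_abs _ _).trans ?_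
    apply Finset.sum_le_sum; intro i _
    refine (Finset.abs_sum_le_sum_abs _ _).trans ?_
    apply Finset.sum_le_sum; intro j _
    rw [abs_mul, abs_mul]
  calc |qf A v| ≤ ∑ i, ∑ j, |v i| * |A i j| * |v j| := h1
    _ ≤ ∑ _i : Fin n, ∑ _j : Fin n, κ * 1 * κ := by
        apply Finset.sum_le_sum; intro i _
        apply Finset.sum_le_sum; intro j _
        exact mul_le_mul (mul_le_mul (hv i) (entry_abs_le hA htr i j)
          (abs_nonneg _) hκ) (hv j) (abs_nonneg _) (by positivity)
    _ = (n:ℝ)^2 * κ^2 := by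
        simp [Finset.sum_const]
        ring

end Statement5Aux

/-- A nontrivial medium has `H¹(supp(μ) ∩ [0,1)ⁿ) ≥ 1/1000`. -/
theorem statement5 {n : ℕ} (hn : 1 ≤ n) (μ : Measure (Rn n))
    (σ : Rn n → Matrix (Fin n) (Fin n) ℝ) (hmed : IsMedium μ σ)
    (hnontriv : ∃ p : Rn n, effC μ σ p ≠ 0) :
    ENNReal.ofReal (1 / 1000) ≤ μH[1] (msupport μ ∩ unitCube n) := by
  classical
  by_contra hcon
  push_neg at hcon
  obtain ⟨p, hp⟩ := hnontriv
  apply hp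
  have hslab := fun i => Statement5Aux.slab_cos μ hmed.invariant hcon i
  choose t η hη0 hη2 havoid using hslab
  set S := {c | ∃ φ : Rn n → ℝ, IsTestFun φ ∧ c = energy μ σ φ p} with hS
  have hae : ∀ᵐ x ∂(μ.restrict (unitCube n)), x ∈ msupport μ := by
    have h : ∀ᵐ x ∂μ, x ∈ msupport μ := by
      rw [ae_iff]
      exact Statement5Aux.msupport_compl_null μ
    exact ae_mono Measure.restrict_le_self h
  have hlb : ∀ c ∈ S, (0:ℝ) ≤ c := by
    rintro c ⟨φ, hφ, rfl⟩
    apply integral_nonneg_of_ae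
    filter_upwards [ae_restrict_of_ae hmed.posSemidef] with x hx
    exact Statement5Aux.qf_nonneg hx _
  have h0test : IsTestFun (fun _ : Rn n => (0:ℝ)) := ⟨contDiff_const, fun x v => rfl⟩
  have hSne : S.Nonempty := ⟨energy μ σ (fun _ => 0) p, ⟨_, h0test, rfl⟩⟩
  haveI : IsFiniteMeasure (μ.restrict (unitCube n)) :=
    ⟨by rw [Measure.restrict_apply_univ]; exact hmed.finiteCube⟩
  have hπ := Real.pi_pos
  -- main construction
  have hmain : ∀ δ : ℝ, 0 < δ → δ ≤ 1 →
      ∃ c ∈ S, c ≤ (n:ℝ)^2 * (‖p‖*δ)^2 * (μ (unitCube n)).toReal := by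
    intro δ hδ0 hδ1
    set r : Fin n → ℝ := fun i => 1 - δ * η i / 4 with hrdef
    have hr0 : ∀ i, 0 < r i := by
      intro i
      have h1 := hη0 i; have h2 := hη2 i
      simp only [hrdef]
      nlinarith
    have hr1 : ∀ i, r i < 1 := by
      intro i
      have h1 := hη0 i
      simp only [hrdef]
      nlinarith [mul_pos hδ0 h1]
    set φ : Rn n → ℝ := fun x => ∑ i, (-(p i)) * Statement5Aux.psi (r i) (t i) (x i) with hφdef
    have htest : IsTestFun φ := by
      constructor
      · apply ContDiff.sum
        intro i _
        exact contDiff_const.mul ((Statement5Aux.psi_contDiff (hr0 i).le (hr1 i) (t i)).comp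
          (EuclideanSpace.proj (𝕜 := ℝ) i).contDiff)
      · intro x v
        apply Finset.sum_congr rfl
        intro i _
        have hxi : (x + latVec v) i = x i + ((v i : ℤ) : ℝ) := by simp [latVec]
        rw [hxi, Statement5Aux.psi_int_periodic]
    set dval : Fin n → Rn n → ℝ := fun i x =>
      2*(r i)*((r i) - Real.cos (2*Real.pi*(x i - t i))) /
        (1 - 2*(r i)*Real.cos (2*Real.pi*(x i - t i)) + (r i)^2) with hdvaldef
    set G : Rn n → Rn n := fun x => WithLp.toLp 2 (fun i => (-(p i)) * dval i x) with hGdef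
    have hgrad : ∀ x : Rn n, HasGradientAt φ (G x) x := by
      intro x
      have hF : HasFDerivAt φ
          (∑ i, ((-(p i)) * dval i x) • (EuclideanSpace.proj (𝕜 := ℝ) i)) x := by
        apply HasFDerivAt.fun_sum
        intro i _
        exact ((Statement5Aux.psi_hasDerivAt (hr0 i) (hr1 i) (t i) (x i)).const_mul
          (-(p i))).comp_hasFDerivAt (f := fun y : Rn n => y i) x (EuclideanSpace.proj (𝕜 := ℝ) i).hasFDerivAt
      rw [hasGradientAt_iff_hasFDerivAt]
      refine hF.congr_fderiv (Eq.symm ?_)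
      apply ContinuousLinearMap.ext
      intro w
      rw [InnerProductSpace.toDual_apply_apply]
      simp only [PiLp.inner_apply, RCLike.inner_apply, conj_trivial,
        ContinuousLinearMap.sum_apply, ContinuousLinearMap.smul_apply, smul_eq_mul, hGdef]
      apply Finset.sum_congr rfl
      intro i _
      exact mul_comm _ _
    have hfeq : ∀ x, gradient φ x = G x := fun x => (hgrad x).gradient
    have hcos : ∀ i, Continuous (fun x : Rn n => Real.cos (2*Real.pi*(x i - t i))) := by
      intro i
      exact Real.continuous_cos.comp (continuous_const.mul
        (((EuclideanSpace.proj (𝕜 := ℝ) i).continuous).sub continuous_const))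
    have hDpos : ∀ i (x : Rn n),
        0 < 1 - 2*(r i)*Real.cos (2*Real.pi*(x i - t i)) + (r i)^2 := by
      intro i x
      have h1 := Real.cos_le_one (2*Real.pi*(x i - t i))
      have h2 := Real.neg_one_le_cos (2*Real.pi*(x i - t i))
      nlinarith [hr0 i, hr1 i, sq_nonneg (1 - r i)]
    have hdvalcont : ∀ i, Continuous (dval i) := by
      intro i
      apply Continuous.div
      · exact continuous_const.mul (continuous_const.sub (hcos i))
      · exact (continuous_const.sub (continuous_const.mul (hcos i))).add continuous_const
      · intro x
        exact ne_of_gt (hDpos i x)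
    have hGicont : ∀ i, Continuous (fun x : Rn n => G x i + p i) := by
      intro i
      exact (continuous_const.mul (hdvalcont i)).add continuous_const
    -- pointwise bound on the support
    have hbound : ∀ x ∈ msupport μ, ∀ i, |(G x + p) i| ≤ ‖p‖ * δ := by
      intro x hx i
      have hgp : (G x + p) i = p i * (1 - dval i x) := by
        simp only [PiLp.add_apply, hGdef]
        ring
      rw [hgp, abs_mul]
      have hd : |dval i x - 1| ≤ δ := by
        have hc := havoid i x hx
        have hc' := Real.neg_one_le_cos (2*Real.pi*(x i - t i))
        exact Statement5Aux.psi_deriv_bound hδ0 hδ1 (hη0 i) (hη2 i) hc hc' rfl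
      rw [abs_sub_comm] at hd
      exact mul_le_mul (Statement5Aux.abs_apply_le_norm p i) hd (abs_nonneg _) (norm_nonneg _)
    set C : ℝ := (n:ℝ)^2 * (‖p‖*δ)^2 with hCdef
    have hqfbound : ∀ᵐ x ∂(μ.restrict (unitCube n)),
        |qf (σ x) (G x + p)| ≤ C := by
      filter_upwards [hae, ae_restrict_of_ae hmed.posSemidef,
        ae_restrict_of_ae hmed.traceOne] with x hx hPSD htr
      exact Statement5Aux.qf_abs_le hPSD htr
        (mul_nonneg (norm_nonneg _) hδ0.le) (hbound x hx)
    have hmeas : AEStronglyMeasurable (fun x => qf (σ x) (G x + p))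
        (μ.restrict (unitCube n)) := by
      apply Measurable.aestronglyMeasurable
      apply Finset.measurable_sum
      intro i _
      apply Finset.measurable_sum
      intro j _
      have h1 : Measurable (fun x : Rn n => (G x + p) i) := by
        have := hGicont i
        simpa [PiLp.add_apply] using this.measurable
      have h2 : Measurable (fun x : Rn n => (G x + p) j) := by
        have := hGicont j
        simpa [PiLp.add_apply] using this.measurable
      exact (h1.mul (hmed.meas i j)).mul h2
    have hInt : Integrable (fun x => qf (σ x) (G x + p)) (μ.restrict (unitCube n)) := by
      apply Integrable.mono' (integrable_const C) hmeas
      filter_upwards [hqfbound] with x hx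
      simpa using hx
    have henergy : energy μ σ φ p = ∫ x in unitCube n, qf (σ x) (G x + p) ∂μ := by
      unfold energy
      apply integral_congr_ae
      apply Filter.Eventually.of_forall
      intro x
      show qf (σ x) (gradient φ x + p) = qf (σ x) (G x + p)
      rw [hfeq x]
    refine ⟨energy μ σ φ p, ⟨φ, htest, rfl⟩, ?_⟩
    rw [henergy]
    calc ∫ x in unitCube n, qf (σ x) (G x + p) ∂μ
        ≤ ∫ _x in unitCube n, C ∂μ := by
          apply integral_mono_ae hInt (integrable_const C)
          filter_upwards [hqfbound] with x hx
          exact le_trans (le_abs_self _) hx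
      _ = (μ (unitCube n)).toReal * C := by
          rw [integral_const, measureReal_restrict_apply_univ, smul_eq_mul, Measure.real]
      _ = (n:ℝ)^2 * (‖p‖*δ)^2 * (μ (unitCube n)).toReal := by rw [hCdef]; ring
  -- conclude effC = 0
  set B := (n:ℝ)^2 * ‖p‖^2 * (μ (unitCube n)).toReal with hBdef
  have hBB : (0:ℝ) ≤ B := by
    rw [hBdef]
    positivity
  have hub : ∀ ε : ℝ, 0 < ε → effC μ σ p ≤ ε := by
    intro ε hε
    set δ := min 1 (ε / (B+1)) with hδdef
    have hδ0 : 0 < δ := lt_min one_pos (div_pos hε (by linarith))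
    have hδ1 : δ ≤ 1 := min_le_left _ _
    obtain ⟨c, hcS, hc⟩ := hmain δ hδ0 hδ1
    have h1 : effC μ σ p ≤ c := csInf_le ⟨0, fun c' hc' => hlb c' hc'⟩ hcS
    have h2 : (n:ℝ)^2 * (‖p‖*δ)^2 * (μ (unitCube n)).toReal = B * δ^2 := by
      rw [hBdef]; ring
    have h3 : B * δ^2 ≤ B * δ := by
      apply mul_le_mul_of_nonneg_left _ hBB
      nlinarith
    have h4 : B * δ ≤ ε := by
      have hδle : δ ≤ ε/(B+1) := min_le_right _ _
      calc B * δ ≤ B * (ε/(B+1)) := mul_le_mul_of_nonneg_left hδle hBB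
        _ ≤ ε := by
            rw [mul_comm, div_mul_eq_mul_div, div_le_iff₀ (by linarith : (0:ℝ) < B+1)]
            nlinarith
    linarith [hc, h2 ▸ hc]
  have hge : (0:ℝ) ≤ effC μ σ p := le_csInf hSne hlb
  have hle : effC μ σ p ≤ 0 := by
    by_contra h
    push_neg at h
    have := hub (effC μ σ p / 2) (by linarith)
    linarith
  linarith
end
end

section
/- A medium (μ, σ) is maximal, i.e., C_{μ,σ}(p) = ∫_{[0,1)^n} p·σ(x)p dμ(x) for every p ∈ ℝ^n, if and only if for every C^∞ vector field Φ : ℝ^n → ℝ^n satisfying Φ(x+v) = Φ(x) for all x ∈ ℝ^n and v ∈ ℤ^n one has ∫_{[0,1)^n} trace(σ(x)·DΦ(x)) dμ(x) = 0, where DΦ(x) is the Jacobian matrix of Φ at x. -/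
open MeasureTheory Filter Topology
open scoped RealInnerProductSpace

noncomputable section

/-- The Jacobian matrix of a vector field `Φ : ℝⁿ → ℝⁿ`: `(DΦ(x))_{ij} = ∂Φ_i/∂x_j`. -/
def jacobian {n : ℕ} (Φ : Rn n → Rn n) (x : Rn n) : Matrix (Fin n) (Fin n) ℝ :=
  fun i j => fderiv ℝ Φ x (EuclideanSpace.single j (1 : ℝ)) i

/-- A medium is maximal if it attains the upper singular Wiener bound. -/
def IsMaximal {n : ℕ} (μ : Measure (Rn n))
    (σ : Rn n → Matrix (Fin n) (Fin n) ℝ) : Prop :=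
  ∀ p : Rn n, effC μ σ p = ∫ x in unitCube n, qf (σ x) p ∂μ

namespace St6

variable {n : ℕ}

/-- coordinate of the gradient is the directional derivative. -/
theorem grad_coord (φ : Rn n → ℝ) (x : Rn n) (i : Fin n) :
    gradient φ x i = fderiv ℝ φ x (EuclideanSpace.single i (1:ℝ)) := by
  have h : @inner ℝ _ _ (gradient φ x) (EuclideanSpace.single i (1:ℝ))
      = fderiv ℝ φ x (EuclideanSpace.single i (1:ℝ)) := by
    rw [gradient, InnerProductSpace.toDual_symm_apply]
  rw [EuclideanSpace.inner_single_right] at h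
  simpa using h

theorem grad_cont {φ : Rn n → ℝ} (hφ : ContDiff ℝ (⊤ : ℕ∞) φ) : Continuous (gradient φ) := by
  have h := hφ.continuous_fderiv (by simp)
  exact (InnerProductSpace.toDual ℝ (Rn n)).symm.continuous.comp h

theorem measurableSet_unitCube (n : ℕ) : MeasurableSet (unitCube n) := by
  have : unitCube n = ⋂ i, (fun x : Rn n => x i) ⁻¹' Set.Ico (0:ℝ) 1 := by
    ext x; simp [unitCube]
  rw [this]
  exact MeasurableSet.iInter fun i =>
    ((EuclideanSpace.proj i (𝕜 := ℝ)).continuous.measurable) measurableSet_Ico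

theorem cube_subset_ball (n : ℕ) : unitCube n ⊆ Metric.closedBall 0 (Real.sqrt n) := by
  intro x hx
  rw [Metric.mem_closedBall, dist_zero_right, EuclideanSpace.norm_eq]
  apply Real.sqrt_le_sqrt
  calc ∑ i, ‖x i‖^2 ≤ ∑ _i : Fin n, 1 := by
        apply Finset.sum_le_sum; intro i _
        have h1 := (hx i).1; have h2 := (hx i).2
        rw [Real.norm_eq_abs]; nlinarith [abs_of_nonneg (hx i).1]
    _ = n := by simp

theorem exists_cube_bound (f : Rn n → Rn n) (hf : Continuous f) :
    ∃ C : ℝ, 0 ≤ C ∧ ∀ x ∈ unitCube n, ∀ i, |f x i| ≤ C := by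
  obtain ⟨C, hC⟩ := (isCompact_closedBall (0 : Rn n) (Real.sqrt n)).exists_bound_of_continuousOn
    hf.continuousOn
  refine ⟨max C 0, le_max_right _ _, fun x hx i => ?_⟩
  have h1 : |f x i| ≤ ‖f x‖ := by
    have h := abs_real_inner_le_norm (f x) (EuclideanSpace.single i (1:ℝ))
    rw [EuclideanSpace.inner_single_right] at h
    simpa using h
  exact h1.trans ((hC x (cube_subset_ball n hx)).trans (le_max_left _ _))

theorem psd_quad {M : Matrix (Fin n) (Fin n) ℝ} (h : M.PosSemidef) (u : Fin n → ℝ) :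
    0 ≤ ∑ k, ∑ l, u k * M k l * u l := by
  have h2 := h.dotProduct_mulVec_nonneg u
  have hd : dotProduct (star u) (M.mulVec u) = ∑ k, ∑ l, u k * M k l * u l := by
    simp only [dotProduct, Matrix.mulVec, star_trivial, Finset.mul_sum]
    exact Finset.sum_congr rfl fun k _ => Finset.sum_congr rfl fun l _ => by ring
  rwa [hd] at h2

theorem entry_bd {M : Matrix (Fin n) (Fin n) ℝ} (h : M.PosSemidef) (ht : M.trace = 1)
    (i j : Fin n) : |M i j| ≤ 1 := by
  have quad := psd_quad h
  have diag : ∀ k, 0 ≤ M k k := by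
    intro k
    have := quad (fun l => if l = k then 1 else 0)
    simpa [ite_mul, mul_ite, Finset.sum_ite_eq, Finset.sum_ite_eq'] using this
  have hdle : ∀ k, M k k ≤ 1 := by
    intro k
    have htr : ∑ l, M l l = 1 := ht
    have h0 : 0 ≤ ∑ l ∈ Finset.univ.erase k, M l l :=
      Finset.sum_nonneg fun l _ => diag l
    have := Finset.add_sum_erase _ (fun l => M l l) (Finset.mem_univ k)
    linarith
  have hsymm : M j i = M i j := by
    have := congrFun (congrFun h.1 i) j
    simpa [Matrix.conjTranspose_apply] using this
  rcases eq_or_ne i j with rfl | hij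
  · rw [abs_le]; exact ⟨by linarith [diag i], hdle i⟩
  · have key : ∀ c : ℝ, 0 ≤ M i i + c * c * M j j + c * (M i j + M j i) := by
      intro c
      have h1 := quad (fun k => (if k = i then 1 else 0) + c * (if k = j then 1 else 0))
      have e : ∑ k, ∑ l, ((if k = i then (1:ℝ) else 0) + c * (if k = j then 1 else 0)) * M k l
            * ((if l = i then 1 else 0) + c * (if l = j then 1 else 0))
          = M i i + c * c * M j j + c * (M i j + M j i) := by
        simp [ite_mul, mul_ite, add_mul, mul_add, Finset.sum_add_distrib,
          Finset.sum_ite_eq, Finset.sum_ite_eq', hij, Ne.symm hij]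
        ring
      rwa [e] at h1
    have k1 := key 1
    have k2 := key (-1)
    rw [abs_le]; constructor <;> nlinarith [hsymm, hdle i, hdle j, diag i, diag j]

variable {μ : Measure (Rn n)} {σ : Rn n → Matrix (Fin n) (Fin n) ℝ}

theorem sigma_ae_bd (hmed : IsMedium μ σ) : ∀ᵐ x ∂μ, ∀ i j, |σ x i j| ≤ 1 := by
  filter_upwards [hmed.posSemidef, hmed.traceOne] with x h1 h2 i j
  exact entry_bd h1 h2 i j

theorem integ_sum (hmed : IsMedium μ σ) (f h : Rn n → Rn n)
    (hf : Continuous f) (hh : Continuous h) :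
    IntegrableOn (fun x => ∑ i, ∑ j, f x i * σ x i j * h x j) (unitCube n) μ := by
  haveI : IsFiniteMeasure (μ.restrict (unitCube n)) :=
    ⟨by rw [Measure.restrict_apply_univ]; exact hmed.finiteCube⟩
  obtain ⟨Cf, hCf0, hCf⟩ := exists_cube_bound f hf
  obtain ⟨Ch, hCh0, hCh⟩ := exists_cube_bound h hh
  have hmeas : AEStronglyMeasurable (fun x => ∑ i, ∑ j, f x i * σ x i j * h x j)
      (μ.restrict (unitCube n)) := by
    apply Measurable.aestronglyMeasurable
    apply Finset.measurable_sum; intro i _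
    apply Finset.measurable_sum; intro j _
    exact (((EuclideanSpace.proj i (𝕜 := ℝ)).continuous.comp hf).measurable.mul
      (hmed.meas i j)).mul ((EuclideanSpace.proj j (𝕜 := ℝ)).continuous.comp hh).measurable
  apply Integrable.mono' (integrable_const ((n : ℝ)^2 * (Cf * Ch))) hmeas
  have hσ : ∀ᵐ x ∂μ.restrict (unitCube n), ∀ i j, |σ x i j| ≤ 1 :=
    ae_restrict_of_ae (sigma_ae_bd hmed)
  have hmem : ∀ᵐ x ∂μ.restrict (unitCube n), x ∈ unitCube n :=
    ae_restrict_mem (measurableSet_unitCube n)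
  filter_upwards [hσ, hmem] with x hσx hx
  rw [Real.norm_eq_abs]
  calc |∑ i, ∑ j, f x i * σ x i j * h x j| ≤ ∑ i, ∑ j, |f x i * σ x i j * h x j| :=
        (Finset.abs_sum_le_sum_abs _ _).trans (Finset.sum_le_sum fun i _ =>
          Finset.abs_sum_le_sum_abs _ _)
    _ ≤ ∑ _i : Fin n, ∑ _j : Fin n, Cf * Ch := by
        apply Finset.sum_le_sum; intro i _
        apply Finset.sum_le_sum; intro j _
        rw [abs_mul, abs_mul]
        calc |f x i| * |σ x i j| * |h x j| ≤ Cf * 1 * Ch := by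
              apply mul_le_mul (mul_le_mul (hCf x hx i) (hσx i j) (abs_nonneg _) hCf0)
                (hCh x hx j) (abs_nonneg _)
              positivity
          _ = Cf * Ch := by ring
    _ = (n : ℝ)^2 * (Cf * Ch) := by simp [Finset.sum_const]; ring

theorem sum_expand (A : Matrix (Fin n) (Fin n) ℝ) (hA : ∀ i j, A i j = A j i)
    (g pp : Fin n → ℝ) (t : ℝ) :
    ∑ i, ∑ j, (t * g i + pp i) * A i j * (t * g j + pp j)
    = t^2 * (∑ i, ∑ j, g i * A i j * g j) + (2*t) * (∑ i, ∑ j, g i * A i j * pp j)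
      + ∑ i, ∑ j, pp i * A i j * pp j := by
  have swap : ∑ i, ∑ j, pp i * A i j * g j = ∑ i, ∑ j, g i * A i j * pp j := by
    rw [Finset.sum_comm]
    exact Finset.sum_congr rfl fun i _ => Finset.sum_congr rfl fun j _ => by
      rw [hA j i]; ring
  calc ∑ i, ∑ j, (t * g i + pp i) * A i j * (t * g j + pp j)
      = ∑ i, ∑ j, (t^2 * (g i * A i j * g j) + t * (g i * A i j * pp j)
          + t * (pp i * A i j * g j) + pp i * A i j * pp j) :=
        Finset.sum_congr rfl fun i _ => Finset.sum_congr rfl fun j _ => by ring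
    _ = t^2 * (∑ i, ∑ j, g i * A i j * g j) + t * (∑ i, ∑ j, g i * A i j * pp j)
          + t * (∑ i, ∑ j, pp i * A i j * g j) + ∑ i, ∑ j, pp i * A i j * pp j := by
        simp only [Finset.sum_add_distrib, Finset.mul_sum]
    _ = _ := by rw [swap]; ring

/-- The bilinear cross term. -/
def Bform (μ : Measure (Rn n)) (σ : Rn n → Matrix (Fin n) (Fin n) ℝ)
    (φ : Rn n → ℝ) (p : Rn n) : ℝ :=
  ∫ x in unitCube n, ∑ i, ∑ j, gradient φ x i * σ x i j * p j ∂μ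

/-- The pure quadratic term. -/
def Qform (μ : Measure (Rn n)) (σ : Rn n → Matrix (Fin n) (Fin n) ℝ)
    (φ : Rn n → ℝ) : ℝ :=
  ∫ x in unitCube n, ∑ i, ∑ j, gradient φ x i * σ x i j * gradient φ x j ∂μ

/-- The constant term. -/
def Cform (μ : Measure (Rn n)) (σ : Rn n → Matrix (Fin n) (Fin n) ℝ) (p : Rn n) : ℝ :=
  ∫ x in unitCube n, qf (σ x) p ∂μ

set_option maxHeartbeats 1000000 in
theorem energy_expand (hmed : IsMedium μ σ) {φ : Rn n → ℝ} (hφ : IsTestFun φ)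
    (t : ℝ) (p : Rn n) :
    energy μ σ (fun x => t * φ x) p
      = t^2 * Qform μ σ φ + (2*t) * Bform μ σ φ p + Cform μ σ p := by
  have hgc : Continuous (gradient φ) := grad_cont hφ.1
  have hgrad : ∀ (x : Rn n) (i : Fin n),
      gradient (fun y => t * φ y) x i = t * gradient φ x i := by
    intro x i
    rw [grad_coord, grad_coord, fderiv_const_mul (hφ.1.differentiable (by simp) x) t]
    simp
  have hpt : (fun x => qf (σ x) (gradient (fun y => t * φ y) x + p))
      = fun x => t^2 * (∑ i, ∑ j, gradient φ x i * σ x i j * gradient φ x j)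
        + (2*t) * (∑ i, ∑ j, gradient φ x i * σ x i j * p j)
        + ∑ i, ∑ j, p i * σ x i j * p j := by
    funext x
    have hsym : ∀ i j, σ x i j = σ x j i := by
      intro i j
      have := congrFun (congrFun (hmed.symm x) j) i
      simpa [Matrix.transpose_apply] using this
    have : ∀ i : Fin n, (gradient (fun y => t * φ y) x + p) i = t * gradient φ x i + p i := by
      intro i; rw [PiLp.add_apply, hgrad]
    simp only [qf, this]
    exact sum_expand (σ x) hsym (fun i => gradient φ x i) (fun i => p i) t
  have hI1 : IntegrableOn
      (fun x => ∑ i, ∑ j, gradient φ x i * σ x i j * gradient φ x j) (unitCube n) μ :=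
    integ_sum hmed _ _ hgc hgc
  have hI2 : IntegrableOn
      (fun x => ∑ i, ∑ j, gradient φ x i * σ x i j * p j) (unitCube n) μ :=
    integ_sum hmed _ (fun _ => p) hgc continuous_const
  have hI3 : IntegrableOn (fun x => ∑ i, ∑ j, p i * σ x i j * p j) (unitCube n) μ :=
    integ_sum hmed (fun _ => p) (fun _ => p) continuous_const continuous_const
  set F1 : Rn n → ℝ := fun x => ∑ i, ∑ j, gradient φ x i * σ x i j * gradient φ x j with hF1
  set F2 : Rn n → ℝ := fun x => ∑ i, ∑ j, gradient φ x i * σ x i j * p j with hF2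
  set F3 : Rn n → ℝ := fun x => ∑ i, ∑ j, p i * σ x i j * p j with hF3
  have e1 : energy μ σ (fun x => t * φ x) p
      = (∫ x in unitCube n, (t^2 * F1 x + (2*t) * F2 x) ∂μ) + ∫ x in unitCube n, F3 x ∂μ := by
    rw [energy, hpt]
    exact integral_add ((hI1.const_mul _).add (hI2.const_mul _)) hI3
  have e2 : (∫ x in unitCube n, (t^2 * F1 x + (2*t) * F2 x) ∂μ)
      = t^2 * (∫ x in unitCube n, F1 x ∂μ) + (2*t) * ∫ x in unitCube n, F2 x ∂μ := by
    exact (integral_add (hI1.const_mul _) (hI2.const_mul _)).trans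
      (by rw [integral_const_mul, integral_const_mul])
  rw [e1, e2]
  simp only [hF1, hF2, hF3, Qform, Bform, Cform, qf]

theorem Q_nonneg (hmed : IsMedium μ σ) (φ : Rn n → ℝ) : 0 ≤ Qform μ σ φ := by
  apply integral_nonneg_of_ae
  filter_upwards [ae_restrict_of_ae hmed.posSemidef] with x hx
  exact psd_quad hx _

theorem energy_nonneg (hmed : IsMedium μ σ) (φ : Rn n → ℝ) (p : Rn n) :
    0 ≤ energy μ σ φ p := by
  apply integral_nonneg_of_ae
  filter_upwards [ae_restrict_of_ae hmed.posSemidef] with x hx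
  exact psd_quad hx fun i => (gradient φ x + p) i

theorem energy_zero (p : Rn n) : energy μ σ (fun _ => (0:ℝ)) p = Cform μ σ p := by
  have h0 : ∀ x : Rn n, gradient (fun _ : Rn n => (0:ℝ)) x + p = p := by
    intro x; simp [gradient]
  rw [energy]
  simp only [h0]
  rfl

theorem test_zero : IsTestFun (fun _ : Rn n => (0:ℝ)) :=
  ⟨contDiff_const, fun _ _ => rfl⟩

theorem test_smul {φ : Rn n → ℝ} (hφ : IsTestFun φ) (t : ℝ) :
    IsTestFun (fun x => t * φ x) :=
  ⟨contDiff_const.mul hφ.1, fun x v => by simp only []; rw [hφ.2]⟩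

theorem B_zero_of_max (hmed : IsMedium μ σ) (hmax : IsMaximal μ σ)
    {φ : Rn n → ℝ} (hφ : IsTestFun φ) (p : Rn n) : Bform μ σ φ p = 0 := by
  set Q := Qform μ σ φ with hQdef
  set B := Bform μ σ φ p with hBdef
  have hkey : ∀ t : ℝ, 0 ≤ t^2 * Q + (2*t) * B := by
    intro t
    have hbdd : BddBelow {c | ∃ ψ : Rn n → ℝ, IsTestFun ψ ∧ c = energy μ σ ψ p} :=
      ⟨0, by rintro c ⟨ψ, hψ, rfl⟩; exact energy_nonneg hmed ψ p⟩
    have hmem : energy μ σ (fun x => t * φ x) p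
        ∈ {c | ∃ ψ : Rn n → ℝ, IsTestFun ψ ∧ c = energy μ σ ψ p} :=
      ⟨_, test_smul hφ t, rfl⟩
    have h1 : effC μ σ p ≤ energy μ σ (fun x => t * φ x) p := csInf_le hbdd hmem
    rw [hmax p] at h1
    rw [energy_expand hmed hφ t p] at h1
    have h2 : (∫ x in unitCube n, qf (σ x) p ∂μ) = Cform μ σ p := rfl
    rw [h2] at h1
    linarith
  have hQ : 0 ≤ Q := Q_nonneg hmed φ
  have hB2 : B^2 ≤ 0 := by
    rcases eq_or_lt_of_le hQ with hQ0 | hQpos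
    · have h := hkey (-B)
      nlinarith [h]
    · have h := hkey (-(B/Q))
      have hQne : Q ≠ 0 := ne_of_gt hQpos
      have h' : 0 ≤ B^2/Q - 2*(B^2/Q) := by
        have e : (-(B/Q))^2 * Q + (2*(-(B/Q))) * B = B^2/Q - 2*(B^2/Q) := by
          field_simp; ring
        linarith [e ▸ h]
      have hdiv : 0 ≤ B^2/Q := div_nonneg (sq_nonneg B) hQ
      have : B^2/Q ≤ 0 := by linarith
      calc B^2 = (B^2/Q) * Q := by field_simp
        _ ≤ 0 := mul_nonpos_of_nonpos_of_nonneg this hQ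
  have : B^2 = 0 := le_antisymm hB2 (sq_nonneg B)
  exact pow_eq_zero_iff two_ne_zero |>.mp this

end St6


/-- A medium is maximal iff it satisfies the Euler–Lagrange equation
`∫ trace(σ(x)·DΦ(x)) dμ(x) = 0` for every smooth `ℤⁿ`-periodic vector field `Φ`. -/
theorem statement6 {n : ℕ} (hn : 1 ≤ n) (μ : Measure (Rn n))
    (σ : Rn n → Matrix (Fin n) (Fin n) ℝ) (hmed : IsMedium μ σ) :
    IsMaximal μ σ ↔
    ∀ Φ : Rn n → Rn n, ContDiff ℝ (⊤ : ℕ∞) Φ →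
      (∀ (x : Rn n) (v : Fin n → ℤ), Φ (x + latVec v) = Φ x) →
      ∫ x in unitCube n, (σ x * jacobian Φ x).trace ∂μ = 0 := by
  constructor
  · -- maximal → Euler–Lagrange
    intro hmax Φ hΦ hper
    have hdiffΦ : Differentiable ℝ Φ := hΦ.differentiable (by simp)
    have htest : ∀ k, IsTestFun (fun x => Φ x k) := by
      intro k
      refine ⟨?_, fun x v => by simp only []; rw [hper]⟩
      exact (EuclideanSpace.proj k (𝕜 := ℝ)).contDiff.comp hΦ
    have hfd : ∀ (k : Fin n) (x : Rn n) (i : Fin n),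
        gradient (fun y => Φ y k) x i = fderiv ℝ Φ x (EuclideanSpace.single i (1:ℝ)) k := by
      intro k x i
      rw [St6.grad_coord]
      have h1 : (fun y => Φ y k) = (EuclideanSpace.proj k (𝕜 := ℝ)) ∘ Φ := rfl
      rw [h1, fderiv_comp x (EuclideanSpace.proj k (𝕜 := ℝ)).differentiableAt (hdiffΦ x),
        ContinuousLinearMap.fderiv]
      rfl
    have hpt : (fun x => (σ x * jacobian Φ x).trace)
        = fun x => ∑ k, ∑ i, ∑ j, gradient (fun y => Φ y k) x i * σ x i j
            * (EuclideanSpace.single k (1:ℝ) : Rn n) j := by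
      funext x
      simp only [Matrix.trace, Matrix.mul_apply, Matrix.diag, jacobian, hfd,
        EuclideanSpace.single_apply, mul_ite, mul_one, mul_zero, Finset.sum_ite_eq',
        Finset.mem_univ, if_true]
      rw [Finset.sum_comm]
      exact Finset.sum_congr rfl fun k _ => Finset.sum_congr rfl fun i _ => by ring
    rw [hpt]
    rw [integral_finset_sum Finset.univ (fun k _ => St6.integ_sum hmed
      (gradient (fun y => Φ y k)) (fun _ => (EuclideanSpace.single k (1:ℝ) : Rn n))
      (St6.grad_cont (htest k).1) continuous_const)]
    apply Finset.sum_eq_zero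
    intro k _
    exact St6.B_zero_of_max hmed hmax (htest k) (EuclideanSpace.single k (1:ℝ))
  · -- Euler–Lagrange → maximal
    intro hEL p
    have hB : ∀ φ : Rn n → ℝ, IsTestFun φ → St6.Bform μ σ φ p = 0 := by
      intro φ hφ
      have hdiff : Differentiable ℝ φ := hφ.1.differentiable (by simp)
      have hsm : ContDiff ℝ (⊤ : ℕ∞) (fun x => φ x • p) := hφ.1.smul contDiff_const
      have hper : ∀ (x : Rn n) (v : Fin n → ℤ),
          (fun x => φ x • p) (x + latVec v) = (fun x => φ x • p) x := by
        intro x v; simp only [hφ.2]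
      have h0 := hEL (fun x => φ x • p) hsm hper
      have hjac : ∀ x (m i : Fin n), jacobian (fun y => φ y • p) x m i
          = fderiv ℝ φ x (EuclideanSpace.single i (1:ℝ)) * p m := by
        intro x m i
        show fderiv ℝ (fun y => φ y • p) x (EuclideanSpace.single i (1:ℝ)) m = _
        rw [fderiv_smul_const (hdiff x) p, ContinuousLinearMap.smulRight_apply]
        rfl
      have hpt : (fun x => (σ x * jacobian (fun y => φ y • p) x).trace)
          = fun x => ∑ i, ∑ j, gradient φ x i * σ x i j * p j := by
        funext x
        simp only [Matrix.trace, Matrix.mul_apply, Matrix.diag, hjac, St6.grad_coord]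
        exact Finset.sum_congr rfl fun i _ => Finset.sum_congr rfl fun m _ => by ring
      rw [St6.Bform, ← hpt]
      exact h0
    have hbdd : BddBelow {c | ∃ ψ : Rn n → ℝ, IsTestFun ψ ∧ c = energy μ σ ψ p} :=
      ⟨0, by rintro c ⟨ψ, hψ, rfl⟩; exact St6.energy_nonneg hmed ψ p⟩
    have hmem : St6.Cform μ σ p ∈ {c | ∃ ψ : Rn n → ℝ, IsTestFun ψ ∧ c = energy μ σ ψ p} :=
      ⟨_, St6.test_zero, (St6.energy_zero p).symm⟩
    have hC : (∫ x in unitCube n, qf (σ x) p ∂μ) = St6.Cform μ σ p := rfl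
    rw [hC]
    refine le_antisymm (csInf_le hbdd hmem) (le_csInf ⟨_, hmem⟩ ?_)
    rintro c ⟨φ, hφ, rfl⟩
    have h1 := St6.energy_expand hmed hφ 1 p
    have heq : (fun x => 1 * φ x) = φ := funext fun x => one_mul _
    rw [heq] at h1
    rw [h1, hB φ hφ]
    have hQ := St6.Q_nonneg hmed φ
    linarith
end
end

section
/- Let A be a real symmetric positive semidefinite n×n matrix with trace A = 1, and let 1 ≤ k ≤ n be an integer. Then A lies in the convex hull of the set { (1/k)·P_V : V a k-dimensional linear subspace of ℝ^n } if and only if v·Av ≤ |v|²/k for every v ∈ ℝ^n (equivalently, every eigenvalue of A is at most 1/k). In particular, for k = 1 every real symmetric positive semidefinite matrix with trace 1 lies in this convex hull. -/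
open MeasureTheory Filter Topology
open scoped RealInnerProductSpace

noncomputable section

/-- The matrix of the orthogonal projection of `ℝⁿ` onto a linear subspace `V`. -/
def projMatrix {n : ℕ} (V : Submodule ℝ (Rn n)) : Matrix (Fin n) (Fin n) ℝ :=
  fun i j => ((Submodule.orthogonalProjectionOnto V (EuclideanSpace.single j (1 : ℝ))) : Rn n) i

section Statement9Aux

variable {n : ℕ}

lemma Rn_sum_apply {ι : Type*} (s : Finset ι) (f : ι → Rn n) (i : Fin n) :
    (∑ j ∈ s, f j) i = ∑ j ∈ s, f j i :=
  by rw [WithLp.ofLp_sum, Finset.sum_apply]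

lemma Rn_inner (x y : Rn n) : ⟪x, y⟫ = ∑ i, x i * y i := by
  simp [PiLp.inner_apply, RCLike.inner_apply, conj_trivial, mul_comm]

lemma qf_eq_sum_mulVec (A : Matrix (Fin n) (Fin n) ℝ) (v : Rn n) :
    qf A v = ∑ i, v i * (A.mulVec v) i := by
  unfold qf Matrix.mulVec dotProduct
  exact Finset.sum_congr rfl fun i _ => by
    rw [Finset.mul_sum]; exact Finset.sum_congr rfl fun j _ => by ring

lemma mulVec_proj (V : Submodule ℝ (Rn n)) (v : Rn n) (i : Fin n) :
    (projMatrix V).mulVec v i = (Submodule.orthogonalProjectionOnto V v : Rn n) i := by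
  have hv := (EuclideanSpace.basisFun (Fin n) ℝ).sum_repr v
  simp only [EuclideanSpace.basisFun_repr, EuclideanSpace.basisFun_apply] at hv
  conv_rhs => rw [← hv]
  rw [map_sum]
  have hcoe : ((∑ j, Submodule.orthogonalProjectionOnto V (v j • EuclideanSpace.single j (1:ℝ)) : V) : Rn n)
      = ∑ j, (Submodule.orthogonalProjectionOnto V (v j • EuclideanSpace.single j (1:ℝ)) : Rn n) := by
    exact Submodule.coe_sum _ _ _
  rw [hcoe, Rn_sum_apply]
  show ∑ j, projMatrix V i j * v j = _
  refine Finset.sum_congr rfl fun j _ => ?_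
  rw [_root_.map_smul]
  simp only [SetLike.val_smul, PiLp.smul_apply, smul_eq_mul, projMatrix]
  ring

lemma qf_proj_le (V : Submodule ℝ (Rn n)) (v : Rn n) : qf (projMatrix V) v ≤ ‖v‖^2 := by
  have hq : qf (projMatrix V) v = ⟪v, (Submodule.orthogonalProjectionOnto V v : Rn n)⟫ := by
    rw [qf_eq_sum_mulVec, Rn_inner]
    exact Finset.sum_congr rfl fun i _ => by rw [mulVec_proj]
  rw [hq]
  have h1 : ⟪v, (Submodule.orthogonalProjectionOnto V v : Rn n)⟫ ≤ ‖v‖ * ‖(Submodule.orthogonalProjectionOnto V v : Rn n)‖ :=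
    real_inner_le_norm _ _
  have h2 : ‖(Submodule.orthogonalProjectionOnto V v : Rn n)‖ ≤ ‖v‖ := by
    have hb := (Submodule.orthogonalProjectionOnto V).le_opNorm v
    have hn : ‖Submodule.orthogonalProjectionOnto V‖ ≤ 1 := Submodule.orthogonalProjectionOnto_norm_le V
    have : ‖(Submodule.orthogonalProjectionOnto V v : Rn n)‖ = ‖Submodule.orthogonalProjectionOnto V v‖ := rfl
    nlinarith [norm_nonneg v]
  nlinarith [norm_nonneg v, norm_nonneg ((Submodule.orthogonalProjectionOnto V v : Rn n))]

lemma qf_add (A B : Matrix (Fin n) (Fin n) ℝ) (v : Rn n) :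
    qf (A + B) v = qf A v + qf B v := by
  simp [qf, Matrix.add_apply, mul_add, add_mul, Finset.sum_add_distrib]

lemma qf_smul (c : ℝ) (A : Matrix (Fin n) (Fin n) ℝ) (v : Rn n) :
    qf (c • A) v = c * qf A v := by
  unfold qf
  rw [Finset.mul_sum]
  refine Finset.sum_congr rfl fun i _ => ?_
  rw [Finset.mul_sum]
  refine Finset.sum_congr rfl fun j _ => ?_
  simp [Matrix.smul_apply]; ring

lemma orthProj_span_eq (b : Fin n → Rn n) (hb : Orthonormal ℝ b) (s : Finset (Fin n)) (x : Rn n) :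
    (Submodule.orthogonalProjectionOnto (Submodule.span ℝ (b '' ↑s)) x : Rn n) = ∑ l ∈ s, ⟪b l, x⟫ • b l := by
  change (Submodule.span ℝ (b '' ↑s)).starProjection x = _
  apply Submodule.eq_starProjection_of_mem_of_inner_eq_zero
  · exact Submodule.sum_mem _ fun l hl =>
      Submodule.smul_mem _ _ (Submodule.subset_span ⟨l, hl, rfl⟩)
  · intro w hw
    have hle : Submodule.span ℝ (b '' ↑s) ≤ (ℝ ∙ (x - ∑ l ∈ s, ⟪b l, x⟫ • b l))ᗮ := by
      rw [Submodule.span_le]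
      rintro _ ⟨m, hm, rfl⟩
      simp only [SetLike.mem_coe]
      rw [Submodule.mem_orthogonal_singleton_iff_inner_right]
      rw [inner_sub_left, sum_inner]
      have hterm : ∀ l ∈ s, ⟪⟪b l, x⟫ • b l, b m⟫ = if l = m then ⟪b m, x⟫ else 0 := by
        intro l hl
        rw [real_inner_smul_left, orthonormal_iff_ite.mp hb l m]
        by_cases h : l = m <;> simp [h]
      rw [Finset.sum_congr rfl hterm, Finset.sum_ite_eq' s m, ]
      rw [if_pos (by exact_mod_cast hm), real_inner_comm]
      ring
    have := hle hw
    rw [Submodule.mem_orthogonal] at this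
    exact this _ (Submodule.mem_span_singleton_self _)

lemma projMatrix_span (b : Fin n → Rn n) (hb : Orthonormal ℝ b) (s : Finset (Fin n)) (i j : Fin n) :
    projMatrix (Submodule.span ℝ (b '' ↑s)) i j = ∑ l ∈ s, b l j * b l i := by
  rw [projMatrix, orthProj_span_eq b hb s, Rn_sum_apply]
  refine Finset.sum_congr rfl fun l hl => ?_
  have : ⟪b l, EuclideanSpace.single j (1:ℝ)⟫ = b l j := by
    rw [EuclideanSpace.inner_single_right]; simp
  rw [PiLp.smul_apply, this, smul_eq_mul]

lemma finrank_span_orthonormal (b : Fin n → Rn n) (hb : Orthonormal ℝ b) (s : Finset (Fin n)) :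
    Module.finrank ℝ (Submodule.span ℝ (b '' ↑s)) = s.card := by
  have h := finrank_span_eq_card
    ((hb.comp ((↑) : ↥(↑s : Set (Fin n)) → Fin n) Subtype.val_injective).linearIndependent)
  rw [Set.range_comp, Subtype.range_val] at h
  rw [h]
  simp

lemma hypersimplex_mem {n k : ℕ} (w : Fin n → ℝ) (h0 : ∀ i, 0 ≤ w i) (h1 : ∀ i, w i ≤ 1)
    (hs : ∑ i, w i = k) :
    w ∈ convexHull ℝ {x : Fin n → ℝ | ∃ s : Finset (Fin n), s.card = k ∧
      x = fun i => if i ∈ s then (1:ℝ) else 0} := by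
  classical
  set S := {x : Fin n → ℝ | ∃ s : Finset (Fin n), s.card = k ∧
      x = fun i => if i ∈ s then (1:ℝ) else 0} with hSdef
  suffices H : ∀ (d : ℕ) (w : Fin n → ℝ), (∀ i, 0 ≤ w i) → (∀ i, w i ≤ 1) → (∑ i, w i = k) →
      (Finset.univ.filter fun i => w i ≠ 0 ∧ w i ≠ 1).card ≤ d → w ∈ convexHull ℝ S by
    exact H _ w h0 h1 hs le_rfl
  intro d
  induction d with
  | zero =>
    intro w h0 h1 hs hcard
    have hall : ∀ i, w i = 0 ∨ w i = 1 := by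
      intro i
      by_contra hi
      push_neg at hi
      have hmem : i ∈ Finset.univ.filter fun i => w i ≠ 0 ∧ w i ≠ 1 := by
        simp [hi.1, hi.2]
      have := Finset.card_pos.mpr ⟨i, hmem⟩
      omega
    set s := Finset.univ.filter (fun i => w i = 1) with hsdef
    have hw : w = fun i => if i ∈ s then (1:ℝ) else 0 := by
      funext i
      rcases hall i with h | h <;> simp [hsdef, h]
    have hcard' : s.card = k := by
      have hk : (k:ℝ) = s.card := by
        rw [← hs, hw]
        simp [Finset.sum_boole, Finset.filter_mem_eq_inter]
      exact_mod_cast hk.symm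
    exact subset_convexHull ℝ S ⟨s, hcard', hw⟩
  | succ d ih =>
    intro w h0 h1 hs hcard
    by_cases hle : (Finset.univ.filter fun i => w i ≠ 0 ∧ w i ≠ 1).card ≤ d
    · exact ih w h0 h1 hs hle
    push_neg at hle
    obtain ⟨i, hi⟩ : ∃ i, w i ≠ 0 ∧ w i ≠ 1 := by
      obtain ⟨i, hi⟩ := Finset.card_pos.mp (Nat.lt_of_le_of_lt (Nat.zero_le d) hle)
      exact ⟨i, (Finset.mem_filter.mp hi).2⟩
    obtain ⟨j, hji, hj⟩ : ∃ j, j ≠ i ∧ (w j ≠ 0 ∧ w j ≠ 1) := by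
      by_contra hc
      push_neg at hc
      have hall : ∀ l ∈ Finset.univ.erase i, w l = if w l = 1 then (1:ℝ) else 0 := by
        intro l hl
        have hne := Finset.ne_of_mem_erase hl
        rcases eq_or_ne (w l) 0 with h | h
        · rw [h]; simp
        · rw [hc l hne h]; simp
      have hsum2 : ∑ l ∈ Finset.univ.erase i, w l =
          ((Finset.univ.erase i).filter fun l => w l = 1).card := by
        rw [Finset.sum_congr rfl hall, Finset.sum_boole]
      set m := ((Finset.univ.erase i).filter fun l => w l = 1).card with hm
      have htot : w i + (m:ℝ) = k := by
        rw [← hsum2, ← hs, Finset.add_sum_erase _ w (Finset.mem_univ i)]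
      have hi0 : 0 < w i := lt_of_le_of_ne (h0 i) (Ne.symm hi.1)
      have hi1 : w i < 1 := lt_of_le_of_ne (h1 i) hi.2
      have h1' : (m:ℝ) < k := by linarith
      have h2' : (k:ℝ) < m + 1 := by linarith
      have : m < k := by exact_mod_cast h1'
      have : k < m + 1 := by exact_mod_cast h2'
      omega
    have hi0 : 0 < w i := lt_of_le_of_ne (h0 i) (Ne.symm hi.1)
    have hi1 : w i < 1 := lt_of_le_of_ne (h1 i) hi.2
    have hj0 : 0 < w j := lt_of_le_of_ne (h0 j) (Ne.symm hj.1)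
    have hj1 : w j < 1 := lt_of_le_of_ne (h1 j) hj.2
    set u : Fin n → ℝ := fun l => (if l = i then (1:ℝ) else 0) - (if l = j then (1:ℝ) else 0)
      with hu
    have hui : u i = 1 := by simp [hu, (Ne.symm hji)]
    have huj : u j = -1 := by simp [hu, hji]
    have hul : ∀ l, l ≠ i → l ≠ j → u l = 0 := by intro l h1 h2; simp [hu, h1, h2]
    have husum : ∑ l, u l = 0 := by
      simp [hu, Finset.sum_sub_distrib]
    set t1 := min (1 - w i) (w j) with ht1
    set t2 := min (w i) (1 - w j) with ht2
    have ht1pos : 0 < t1 := lt_min (by linarith) hj0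
    have ht2pos : 0 < t2 := lt_min hi0 (by linarith)
    have ht1a : t1 ≤ 1 - w i := min_le_left _ _
    have ht1b : t1 ≤ w j := min_le_right _ _
    have ht2a : t2 ≤ w i := min_le_left _ _
    have ht2b : t2 ≤ 1 - w j := min_le_right _ _
    set w1 : Fin n → ℝ := fun l => w l + t1 * u l with hw1
    set w2 : Fin n → ℝ := fun l => w l - t2 * u l with hw2
    -- bounds
    have hb1 : ∀ l, 0 ≤ w1 l ∧ w1 l ≤ 1 := by
      intro l
      by_cases hli : l = i
      · subst hli; rw [hw1]; simp only [hui]; constructor <;> linarith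
      by_cases hlj : l = j
      · subst hlj; rw [hw1]; simp only [huj]; constructor <;> linarith
      · rw [hw1]; simp only [hul l hli hlj]; constructor <;> linarith [h0 l, h1 l]
    have hb2 : ∀ l, 0 ≤ w2 l ∧ w2 l ≤ 1 := by
      intro l
      by_cases hli : l = i
      · subst hli; rw [hw2]; simp only [hui]; constructor <;> linarith
      by_cases hlj : l = j
      · subst hlj; rw [hw2]; simp only [huj]; constructor <;> linarith
      · rw [hw2]; simp only [hul l hli hlj]; constructor <;> linarith [h0 l, h1 l]
    have hs1 : ∑ l, w1 l = k := by
      rw [hw1]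
      simp only [Finset.sum_add_distrib, ← Finset.mul_sum, husum, hs, mul_zero, add_zero]
    have hs2 : ∑ l, w2 l = k := by
      rw [hw2]
      simp only [Finset.sum_sub_distrib, ← Finset.mul_sum, husum, hs, mul_zero, sub_zero]
    -- fractional sets shrink
    have hfrac : ∀ (w' : Fin n → ℝ), (∀ l, l ≠ i → l ≠ j → w' l = w l) →
        (w' i = 1 ∨ w' i = 0 ∨ w' j = 1 ∨ w' j = 0) →
        (Finset.univ.filter fun l => w' l ≠ 0 ∧ w' l ≠ 1).card ≤ d := by
      intro w' hsame hdeg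
      have hsub : (Finset.univ.filter fun l => w' l ≠ 0 ∧ w' l ≠ 1) ⊆
          (Finset.univ.filter fun l => w l ≠ 0 ∧ w l ≠ 1) := by
        intro l hl
        rw [Finset.mem_filter] at hl ⊢
        refine ⟨Finset.mem_univ _, ?_⟩
        by_cases hli : l = i
        · subst hli; exact hi
        by_cases hlj : l = j
        · subst hlj; exact hj
        · rw [← hsame l hli hlj]; exact hl.2
      have hne : ∃ l ∈ (Finset.univ.filter fun l => w l ≠ 0 ∧ w l ≠ 1),
          l ∉ (Finset.univ.filter fun l => w' l ≠ 0 ∧ w' l ≠ 1) := by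
        rcases hdeg with h | h | h | h
        · exact ⟨i, by simp [hi.1, hi.2], by simp [h]⟩
        · exact ⟨i, by simp [hi.1, hi.2], by simp [h]⟩
        · exact ⟨j, by simp [hj.1, hj.2], by simp [h]⟩
        · exact ⟨j, by simp [hj.1, hj.2], by simp [h]⟩
      have hss : (Finset.univ.filter fun l => w' l ≠ 0 ∧ w' l ≠ 1) ⊂
          (Finset.univ.filter fun l => w l ≠ 0 ∧ w l ≠ 1) := by
        rw [Finset.ssubset_iff_of_subset hsub]
        exact hne
      have := Finset.card_lt_card hss
      omega
    have hc1 : (Finset.univ.filter fun l => w1 l ≠ 0 ∧ w1 l ≠ 1).card ≤ d := by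
      refine hfrac w1 (fun l hli hlj => by rw [hw1]; simp [hul l hli hlj]) ?_
      rcases min_cases (1 - w i) (w j) with ⟨hmin, _⟩ | ⟨hmin, _⟩
      · left; rw [hw1]; simp only [hui]; rw [ht1, hmin]; ring
      · right; right; right; rw [hw1]; simp only [huj]; rw [ht1, hmin]; ring
    have hc2 : (Finset.univ.filter fun l => w2 l ≠ 0 ∧ w2 l ≠ 1).card ≤ d := by
      refine hfrac w2 (fun l hli hlj => by rw [hw2]; simp [hul l hli hlj]) ?_
      rcases min_cases (w i) (1 - w j) with ⟨hmin, _⟩ | ⟨hmin, _⟩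
      · right; left; rw [hw2]; simp only [hui]; rw [ht2, hmin]; ring
      · right; right; left; rw [hw2]; simp only [huj]; rw [ht2, hmin]; ring
    have hm1 : w1 ∈ convexHull ℝ S := ih w1 (fun l => (hb1 l).1) (fun l => (hb1 l).2) hs1 hc1
    have hm2 : w2 ∈ convexHull ℝ S := ih w2 (fun l => (hb2 l).1) (fun l => (hb2 l).2) hs2 hc2
    have hT : 0 < t1 + t2 := by linarith
    have hcomb : w = (t2/(t1+t2)) • w1 + (t1/(t1+t2)) • w2 := by
      funext l
      simp only [Pi.add_apply, Pi.smul_apply, smul_eq_mul, hw1, hw2]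
      field_simp
      ring
    rw [hcomb]
    exact convex_convexHull ℝ S hm1 hm2 (by positivity) (by positivity)
      (by field_simp; ring)

end Statement9Aux

/-- A symmetric positive semidefinite matrix `A` with `trace A = 1` lies in
the convex hull of `{(1/k)·P_V : V a k-dimensional subspace of ℝⁿ}` iff
`v⬝Av ≤ |v|²/k` for all `v` (i.e. all eigenvalues of `A` are at most `1/k`). -/
theorem statement9 {n : ℕ} (hn : 1 ≤ n) (A : Matrix (Fin n) (Fin n) ℝ)
    (hA : A.PosSemidef) (htr : A.trace = 1) (k : ℕ) (hk1 : 1 ≤ k) (hkn : k ≤ n) :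
    A ∈ convexHull ℝ {B : Matrix (Fin n) (Fin n) ℝ |
        ∃ V : Submodule ℝ (Rn n), Module.finrank ℝ V = k ∧ B = ((k : ℝ)⁻¹) • projMatrix V} ↔
    ∀ v : Rn n, qf A v ≤ ‖v‖ ^ 2 / k := by
  have hkpos : (0:ℝ) < k := by exact_mod_cast hk1
  constructor
  · intro hmem v
    have hconv : Convex ℝ {B : Matrix (Fin n) (Fin n) ℝ | ∀ v : Rn n, qf B v ≤ ‖v‖^2 / k} := by
      intro B1 hB1 B2 hB2 a c ha hc hac
      intro u
      show qf (a • B1 + c • B2) u ≤ ‖u‖^2 / k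
      rw [qf_add, qf_smul, qf_smul]
      have e1 := mul_le_mul_of_nonneg_left (hB1 u) ha
      have e2 := mul_le_mul_of_nonneg_left (hB2 u) hc
      have e3 : a * (‖u‖^2/(k:ℝ)) + c * (‖u‖^2/(k:ℝ)) = ‖u‖^2/(k:ℝ) := by
        rw [← add_mul, hac, one_mul]
      linarith
    have hsub : {B : Matrix (Fin n) (Fin n) ℝ |
          ∃ V : Submodule ℝ (Rn n), Module.finrank ℝ V = k ∧ B = ((k : ℝ)⁻¹) • projMatrix V} ⊆
        {B : Matrix (Fin n) (Fin n) ℝ | ∀ v : Rn n, qf B v ≤ ‖v‖^2 / k} := by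
      rintro B ⟨V, _, rfl⟩ u
      rw [qf_smul, div_eq_inv_mul]
      exact mul_le_mul_of_nonneg_left (qf_proj_le V u) (by positivity)
    exact convexHull_min hsub hconv hmem v
  · intro h
    classical
    have hH : A.IsHermitian := hA.1
    set b := hH.eigenvectorBasis with hbdef
    set μ := hH.eigenvalues with hμdef
    have hbo : Orthonormal ℝ (⇑b) := b.orthonormal
    have hbnorm : ∀ l, ‖(b l : Rn n)‖ = 1 := fun l => hbo.1 l
    have hnorm : ∀ l, ∑ i, b l i * b l i = 1 := by
      intro l
      have h2 := Rn_inner (b l) (b l)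
      rw [real_inner_self_eq_norm_sq, hbnorm l] at h2
      simpa using h2.symm
    have hentry : ∀ i j, A i j = ∑ l, μ l * (b l i * b l j) := by
      intro i j
      conv_lhs => rw [hH.spectral_theorem]
      rw [Unitary.conjStarAlgAut_apply, Matrix.mul_apply]
      refine Finset.sum_congr rfl fun m _ => ?_
      rw [Matrix.mul_diagonal, Matrix.star_apply]
      simp only [Matrix.IsHermitian.eigenvectorUnitary_apply, Function.comp_apply,
        RCLike.ofReal_real_eq_id, id_eq, star_trivial, Unitary.coe_star]
      ring
    have hsum1 : ∑ l, μ l = 1 := by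
      calc ∑ l, μ l = ∑ l, μ l * ∑ i, b l i * b l i := by
            refine Finset.sum_congr rfl fun l _ => ?_; rw [hnorm l, mul_one]
        _ = ∑ l, ∑ i, μ l * (b l i * b l i) := by
            refine Finset.sum_congr rfl fun l _ => ?_; rw [Finset.mul_sum]
        _ = ∑ i, ∑ l, μ l * (b l i * b l i) := Finset.sum_comm
        _ = ∑ i, A i i := by exact Finset.sum_congr rfl fun i _ => (hentry i i).symm
        _ = A.trace := rfl
        _ = 1 := htr
    have hμ0 : ∀ l, 0 ≤ μ l := fun l => hA.eigenvalues_nonneg l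
    have hμk : ∀ l, μ l ≤ (k:ℝ)⁻¹ := by
      intro l
      have hmv : A.mulVec (b l) = fun i => μ l * b l i := by
        funext i
        have h3 := congrFun (hH.mulVec_eigenvectorBasis l) i
        simpa using h3
      have hqf : qf A (b l) = μ l := by
        rw [qf_eq_sum_mulVec, hmv]
        calc ∑ i, b l i * (μ l * b l i) = μ l * ∑ i, b l i * b l i := by
              rw [Finset.mul_sum]; exact Finset.sum_congr rfl fun i _ => by ring
          _ = μ l := by rw [hnorm l, mul_one]
      have h4 := h (b l)
      rw [hqf, hbnorm l] at h4
      calc μ l ≤ 1^2 / (k:ℝ) := h4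
        _ = (k:ℝ)⁻¹ := by rw [one_pow, one_div]
    set w : Fin n → ℝ := fun l => (k:ℝ) * μ l with hwdef
    have hw0 : ∀ l, 0 ≤ w l := fun l => mul_nonneg (le_of_lt hkpos) (hμ0 l)
    have hw1 : ∀ l, w l ≤ 1 := by
      intro l
      have := mul_le_mul_of_nonneg_left (hμk l) (le_of_lt hkpos)
      rwa [mul_inv_cancel₀ (ne_of_gt hkpos)] at this
    have hwsum : ∑ l, w l = (k:ℝ) := by
      rw [hwdef]
      rw [← Finset.mul_sum, hsum1, mul_one]
    have hwmem := hypersimplex_mem w hw0 hw1 hwsum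
    set T : (Fin n → ℝ) →ₗ[ℝ] Matrix (Fin n) (Fin n) ℝ :=
      ∑ l, ((LinearMap.proj l : ((Fin n) → ℝ) →ₗ[ℝ] ℝ).smulRight
        (((k:ℝ)⁻¹ * 1) • (Matrix.of fun i j => b l i * b l j))) with hTdef
    have hTapp : ∀ (x : Fin n → ℝ) i j, T x i j = ∑ l, x l * ((k:ℝ)⁻¹ * (b l i * b l j)) := by
      intro x i j
      rw [hTdef]
      rw [LinearMap.sum_apply, Matrix.sum_apply]
      refine Finset.sum_congr rfl fun l _ => ?_
      simp only [LinearMap.smulRight_apply, LinearMap.proj_apply, Matrix.smul_apply,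
        Matrix.of_apply, smul_eq_mul]
      ring
    have hTA : T w = A := by
      ext i j
      rw [hTapp, hentry]
      refine Finset.sum_congr rfl fun l _ => ?_
      rw [hwdef]
      field_simp
    have himg : A ∈ T '' (convexHull ℝ {x : Fin n → ℝ | ∃ s : Finset (Fin n), s.card = k ∧
        x = fun i => if i ∈ s then (1:ℝ) else 0}) := ⟨w, hwmem, hTA⟩
    rw [T.image_convexHull] at himg
    refine convexHull_mono ?_ himg
    rintro B ⟨x, ⟨s, hscard, rfl⟩, rfl⟩
    refine ⟨Submodule.span ℝ (⇑b '' ↑s), ?_, ?_⟩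
    · rw [finrank_span_orthonormal _ hbo, hscard]
    · ext i j
      rw [hTapp, Matrix.smul_apply, smul_eq_mul, projMatrix_span _ hbo]
      simp only [ite_mul, one_mul, zero_mul]
      rw [Finset.sum_ite_mem, Finset.univ_inter, Finset.mul_sum]
      exact Finset.sum_congr rfl fun l _ => by ring
end
end

section
/- For every medium (μ, σ), the function p ↦ C_{μ,σ}(p) is a (positive semidefinite) quadratic form on ℝ^n: there exists a symmetric bilinear form B : ℝ^n × ℝ^n → ℝ such that C_{μ,σ}(p) = B(p,p) for every p ∈ ℝ^n, and B(p,p) ≥ 0 for all p. -/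
open MeasureTheory Filter Topology
open scoped RealInnerProductSpace

noncomputable section

namespace S11

variable {n : ℕ}

lemma rn_add_apply (u v : Rn n) (i : Fin n) : (u + v) i = u i + v i := rfl
lemma rn_sub_apply (u v : Rn n) (i : Fin n) : (u - v) i = u i - v i := rfl
lemma rn_smul_apply (t : ℝ) (v : Rn n) (i : Fin n) : (t • v) i = t * v i := rfl
lemma rn_zero_apply (i : Fin n) : (0 : Rn n) i = 0 := rfl

lemma qf_par (A : Matrix (Fin n) (Fin n) ℝ) (u v : Rn n) :
    qf A (u + v) + qf A (u - v) = 2 * qf A u + 2 * qf A v := by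
  unfold qf
  rw [← Finset.sum_add_distrib, Finset.mul_sum, Finset.mul_sum, ← Finset.sum_add_distrib]
  refine Finset.sum_congr rfl fun i _ => ?_
  rw [← Finset.sum_add_distrib, Finset.mul_sum, Finset.mul_sum, ← Finset.sum_add_distrib]
  refine Finset.sum_congr rfl fun j _ => ?_
  show (u i + v i) * A i j * (u j + v j) + (u i - v i) * A i j * (u j - v j) =
    2 * (u i * A i j * u j) + 2 * (v i * A i j * v j)
  ring

lemma qf_zero (A : Matrix (Fin n) (Fin n) ℝ) : qf A (0 : Rn n) = 0 := by
  simp [qf, rn_zero_apply]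

lemma qf_smul (A : Matrix (Fin n) (Fin n) ℝ) (t : ℝ) (v : Rn n) :
    qf A (t • v) = t ^ 2 * qf A v := by
  unfold qf
  rw [Finset.mul_sum]
  refine Finset.sum_congr rfl fun i _ => ?_
  rw [Finset.mul_sum]
  refine Finset.sum_congr rfl fun j _ => ?_
  show (t * v i) * A i j * (t * v j) = t ^ 2 * (v i * A i j * v j)
  ring

lemma qf_eq_dot (A : Matrix (Fin n) (Fin n) ℝ) (v : Rn n) :
    qf A v = dotProduct (fun i => v i) (A.mulVec fun i => v i) := by
  simp [qf, dotProduct, Matrix.mulVec, Finset.mul_sum, mul_assoc]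

lemma qf_nonneg {A : Matrix (Fin n) (Fin n) ℝ} (hA : A.PosSemidef) (v : Rn n) :
    0 ≤ qf A v := by
  rw [qf_eq_dot]
  simpa using hA.dotProduct_mulVec_nonneg (fun i => v i)

lemma entry_abs_le {A : Matrix (Fin n) (Fin n) ℝ} (hA : A.PosSemidef) (ht : A.trace = 1)
    (i j : Fin n) : |A i j| ≤ 1 := by
  have hd : ∀ k, 0 ≤ A k k := fun k => by
    simpa [Matrix.mulVec_single, single_dotProduct] using hA.dotProduct_mulVec_nonneg (Pi.single k 1)
  have htr : ∑ k, A k k = 1 := by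
    simpa [Matrix.trace, Matrix.diag] using ht
  have hbound : ∀ k, A k k ≤ 1 := by
    intro k
    rw [← htr]
    exact Finset.single_le_sum (fun l _ => hd l) (Finset.mem_univ k)
  by_cases hij : i = j
  · subst hij; rw [abs_of_nonneg (hd i)]; exact hbound i
  · have hsym : A j i = A i j := by
      have h := congrFun (congrFun hA.1 i) j
      simpa [Matrix.conjTranspose_apply] using h
    have key : ∀ c : ℝ, 0 ≤ A i i + c * A i j + c * A j i + c ^ 2 * A j j := by
      intro c
      have h := hA.dotProduct_mulVec_nonneg (Pi.single i 1 + Pi.single j c)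
      simp only [star_trivial, Matrix.mulVec_add, Matrix.mulVec_single, add_dotProduct,
        single_dotProduct, Pi.add_apply] at h
      simp only [Pi.smul_apply, Matrix.col_apply, op_smul_eq_mul] at h
      nlinarith [h]
    have h1 := key 1
    have h2 := key (-1)
    have hsum2 : A i i + A j j ≤ 1 := by
      rw [← htr]
      have hp : (({i, j} : Finset (Fin n)).sum fun k => A k k) = A i i + A j j :=
        Finset.sum_pair hij
      rw [← hp]
      exact Finset.sum_le_sum_of_subset_of_nonneg (Finset.subset_univ _) fun k _ _ => hd k
    rw [abs_le]
    constructor <;> nlinarith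

lemma qf_abs_le {A : Matrix (Fin n) (Fin n) ℝ} (h1 : ∀ i j, |A i j| ≤ 1) (v : Rn n) :
    |qf A v| ≤ n * ‖v‖ ^ 2 := by
  have habs : |qf A v| ≤ ∑ i, ∑ j, |v i| * |v j| := by
    refine (Finset.abs_sum_le_sum_abs _ _).trans ?_
    refine Finset.sum_le_sum fun i _ => ?_
    refine (Finset.abs_sum_le_sum_abs _ _).trans ?_
    refine Finset.sum_le_sum fun j _ => ?_
    rw [abs_mul, abs_mul]
    calc |v i| * |A i j| * |v j| ≤ |v i| * 1 * |v j| := by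
          refine mul_le_mul_of_nonneg_right ?_ (abs_nonneg _)
          exact mul_le_mul_of_nonneg_left (h1 i j) (abs_nonneg _)
      _ = |v i| * |v j| := by ring
  have hsq : ∑ i, ∑ j, |v i| * |v j| = (∑ i, |v i|) ^ 2 := by
    rw [sq, Finset.sum_mul_sum]
  have hcs : (∑ i, |v i|) ^ 2 ≤ (n : ℝ) * ∑ i, |v i| ^ 2 := by
    have := sq_sum_le_card_mul_sum_sq (s := (Finset.univ : Finset (Fin n)))
      (f := fun i => |v i|)
    simpa using this
  have hnorm : ∑ i, |v i| ^ 2 = ‖v‖ ^ 2 := by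
    rw [PiLp.norm_sq_eq_of_L2]
    exact Finset.sum_congr rfl fun i _ => by rw [Real.norm_eq_abs]
  calc |qf A v| ≤ ∑ i, ∑ j, |v i| * |v j| := habs
    _ = (∑ i, |v i|) ^ 2 := hsq
    _ ≤ (n : ℝ) * ∑ i, |v i| ^ 2 := hcs
    _ = n * ‖v‖ ^ 2 := by rw [hnorm]


/-! ### Gradient lemmas -/

lemma gradient_add' {φ ψ : Rn n → ℝ} (hφ : Differentiable ℝ φ) (hψ : Differentiable ℝ ψ)
    (x : Rn n) : gradient (fun y => φ y + ψ y) x = gradient φ x + gradient ψ x := by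
  unfold gradient
  rw [fderiv_fun_add (hφ x) (hψ x), map_add]

lemma gradient_sub' {φ ψ : Rn n → ℝ} (hφ : Differentiable ℝ φ) (hψ : Differentiable ℝ ψ)
    (x : Rn n) : gradient (fun y => φ y - ψ y) x = gradient φ x - gradient ψ x := by
  unfold gradient
  rw [fderiv_fun_sub (hφ x) (hψ x), map_sub]

lemma gradient_const_mul' {φ : Rn n → ℝ} (hφ : Differentiable ℝ φ) (t : ℝ)
    (x : Rn n) : gradient (fun y => t * φ y) x = t • gradient φ x := by
  unfold gradient
  rw [fderiv_const_mul (hφ x), _root_.map_smul]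

lemma gradient_zero' (x : Rn n) : gradient (fun _ : Rn n => (0 : ℝ)) x = 0 := gradient_const x (0:ℝ)

lemma continuous_gradient {φ : Rn n → ℝ} (hφ : ContDiff ℝ (⊤ : ℕ∞) φ) :
    Continuous (gradient φ) := by
  have h1 : Continuous (fderiv ℝ φ) := hφ.continuous_fderiv (by simp)
  exact (LinearIsometryEquiv.continuous _).comp h1

/-! ### Test function lemmas -/

lemma isTestFun_zero : IsTestFun (fun _ : Rn n => (0 : ℝ)) :=
  ⟨contDiff_const, fun _ _ => rfl⟩

lemma testAdd {φ ψ : Rn n → ℝ} (hφ : IsTestFun φ) (hψ : IsTestFun ψ) :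
    IsTestFun (fun x => φ x + ψ x) :=
  ⟨hφ.1.add hψ.1, fun x v => by simp only []; rw [hφ.2 x v, hψ.2 x v]⟩

lemma testSub {φ ψ : Rn n → ℝ} (hφ : IsTestFun φ) (hψ : IsTestFun ψ) :
    IsTestFun (fun x => φ x - ψ x) :=
  ⟨hφ.1.sub hψ.1, fun x v => by simp only []; rw [hφ.2 x v, hψ.2 x v]⟩

lemma testConstMul {φ : Rn n → ℝ} (hφ : IsTestFun φ) (t : ℝ) :
    IsTestFun (fun x => t * φ x) :=
  ⟨contDiff_const.mul hφ.1, fun x v => by simp only []; rw [hφ.2 x v]⟩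

/-! ### Boundedness of the gradient on the cube -/

lemma isCompact_closedCube :
    IsCompact {x : Rn n | ∀ i, x i ∈ Set.Icc (0 : ℝ) 1} := by
  apply Metric.isCompact_of_isClosed_isBounded
  · have : {x : Rn n | ∀ i, x i ∈ Set.Icc (0 : ℝ) 1} =
        ⋂ i, (fun x : Rn n => x i) ⁻¹' Set.Icc (0 : ℝ) 1 := by
      ext x; simp [Set.mem_iInter]
    rw [this]
    exact isClosed_iInter fun i =>
      isClosed_Icc.preimage (EuclideanSpace.proj (𝕜 := ℝ) i).continuous
  · rw [Metric.isBounded_iff_subset_closedBall 0]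
    refine ⟨Real.sqrt n, fun x hx => ?_⟩
    simp only [Metric.mem_closedBall, dist_zero_right]
    rw [EuclideanSpace.norm_eq]
    apply Real.sqrt_le_sqrt
    calc ∑ i, ‖x i‖ ^ 2 ≤ ∑ _i : Fin n, 1 := by
          refine Finset.sum_le_sum fun i _ => ?_
          have h := hx i
          rw [Real.norm_eq_abs, sq_abs]
          nlinarith [h.1, h.2]
      _ = n := by simp

/-! ### Integrability and energy -/

lemma measurableSet_unitCube : MeasurableSet (unitCube n) := by
  have : unitCube n = ⋂ i, (fun x : Rn n => x i) ⁻¹' Set.Ico (0 : ℝ) 1 := by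
    ext x; simp [unitCube, Set.mem_iInter]
  rw [this]
  exact MeasurableSet.iInter fun i =>
    measurableSet_Ico.preimage (EuclideanSpace.proj (𝕜 := ℝ) i).continuous.measurable

variable {μ : Measure (Rn n)} {σ : Rn n → Matrix (Fin n) (Fin n) ℝ}

lemma ae_entry_abs_le (hmed : IsMedium μ σ) : ∀ᵐ x ∂μ, ∀ i j, |σ x i j| ≤ 1 :=
  (hmed.posSemidef.and hmed.traceOne).mono fun _ hx => entry_abs_le hx.1 hx.2

lemma exists_gradient_bound {φ : Rn n → ℝ} (hφ : IsTestFun φ) (p : Rn n) :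
    ∃ M : ℝ, ∀ x ∈ unitCube n, ‖gradient φ x + p‖ ≤ M := by
  obtain ⟨M, hM⟩ := isCompact_closedCube.exists_bound_of_continuousOn
    (f := fun x => gradient φ x + p)
    ((continuous_gradient hφ.1).add continuous_const).continuousOn
  exact ⟨M, fun x hx => hM x fun i => ⟨(hx i).1, le_of_lt (hx i).2⟩⟩

lemma measurable_integrand (hmed : IsMedium μ σ) {φ : Rn n → ℝ} (hφ : IsTestFun φ)
    (p : Rn n) : Measurable fun x => qf (σ x) (gradient φ x + p) := by
  have hcoord : ∀ k : Fin n, Measurable fun x => (gradient φ x + p) k := fun k =>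
    ((EuclideanSpace.proj (𝕜 := ℝ) k).continuous.comp
      ((continuous_gradient hφ.1).add continuous_const)).measurable
  simp only [qf]
  exact Finset.measurable_sum _ fun i _ => Finset.measurable_sum _ fun j _ =>
    ((hcoord i).mul (hmed.meas i j)).mul (hcoord j)

lemma integrable_integrand (hmed : IsMedium μ σ) {φ : Rn n → ℝ} (hφ : IsTestFun φ)
    (p : Rn n) :
    Integrable (fun x => qf (σ x) (gradient φ x + p)) (μ.restrict (unitCube n)) := by
  haveI : IsFiniteMeasure (μ.restrict (unitCube n)) :=
    ⟨by rw [Measure.restrict_apply_univ]; exact hmed.finiteCube⟩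
  obtain ⟨M, hM⟩ := exists_gradient_bound hφ p
  refine Integrable.mono' (integrable_const ((n : ℝ) * M ^ 2))
    (measurable_integrand hmed hφ p).aestronglyMeasurable ?_
  have h1 : ∀ᵐ x ∂μ.restrict (unitCube n), ∀ i j, |σ x i j| ≤ 1 :=
    ae_restrict_of_ae (ae_entry_abs_le hmed)
  have h2 : ∀ᵐ x ∂μ.restrict (unitCube n), x ∈ unitCube n :=
    ae_restrict_mem measurableSet_unitCube
  filter_upwards [h1, h2] with x hx hmem
  rw [Real.norm_eq_abs]
  calc |qf (σ x) (gradient φ x + p)| ≤ n * ‖gradient φ x + p‖ ^ 2 := qf_abs_le hx _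
    _ ≤ n * M ^ 2 := by
        have h := hM x hmem
        exact mul_le_mul_of_nonneg_left
          (pow_le_pow_left₀ (norm_nonneg _) h 2) (Nat.cast_nonneg n)

lemma energy_nonneg (hmed : IsMedium μ σ) (φ : Rn n → ℝ) (p : Rn n) :
    0 ≤ energy μ σ φ p :=
  integral_nonneg_of_ae <| ae_restrict_of_ae <|
    hmed.posSemidef.mono fun _ hx => qf_nonneg hx _

lemma energy_zero_fn_zero : energy μ σ (fun _ => 0) 0 = 0 := by
  unfold energy
  have h : ∀ x : Rn n, qf (σ x) (gradient (fun _ : Rn n => (0 : ℝ)) x + 0) = 0 := fun x => by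
    rw [gradient_zero', add_zero, qf_zero]
  simp only [h, integral_zero]

lemma energy_zero_fn_le (hmed : IsMedium μ σ) (p : Rn n) :
    energy μ σ (fun _ => 0) p ≤ (n : ℝ) * (μ (unitCube n)).toReal * ‖p‖ ^ 2 := by
  haveI : IsFiniteMeasure (μ.restrict (unitCube n)) :=
    ⟨by rw [Measure.restrict_apply_univ]; exact hmed.finiteCube⟩
  unfold energy
  have h1 : ∀ᵐ x ∂μ.restrict (unitCube n), ∀ i j, |σ x i j| ≤ 1 :=
    ae_restrict_of_ae (ae_entry_abs_le hmed)
  have hb : ∀ᵐ x ∂μ.restrict (unitCube n),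
      qf (σ x) (gradient (fun _ => (0 : ℝ)) x + p) ≤ (n : ℝ) * ‖p‖ ^ 2 := by
    filter_upwards [h1] with x hx
    rw [gradient_zero', zero_add]
    exact (le_abs_self _).trans (qf_abs_le hx p)
  calc (∫ x in unitCube n, qf (σ x) (gradient (fun _ => (0:ℝ)) x + p) ∂μ)
      ≤ ∫ _x in unitCube n, (n : ℝ) * ‖p‖ ^ 2 ∂μ :=
        integral_mono_ae (integrable_integrand hmed isTestFun_zero p)
          (integrable_const _) hb
    _ = (μ (unitCube n)).toReal * ((n : ℝ) * ‖p‖ ^ 2) := by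
        rw [integral_const, measureReal_restrict_apply_univ, smul_eq_mul, measureReal_def]
    _ = (n : ℝ) * (μ (unitCube n)).toReal * ‖p‖ ^ 2 := by ring

lemma energy_par (hmed : IsMedium μ σ) {φ ψ : Rn n → ℝ} (hφ : IsTestFun φ)
    (hψ : IsTestFun ψ) (p q : Rn n) :
    energy μ σ (fun x => φ x + ψ x) (p + q) + energy μ σ (fun x => φ x - ψ x) (p - q)
      = 2 * energy μ σ φ p + 2 * energy μ σ ψ q := by
  have hdφ : Differentiable ℝ φ := hφ.1.differentiable (by simp)
  have hdψ : Differentiable ℝ ψ := hψ.1.differentiable (by simp)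
  unfold energy
  rw [← integral_add (integrable_integrand hmed (testAdd hφ hψ) (p + q))
    (integrable_integrand hmed (testSub hφ hψ) (p - q)),
    ← integral_const_mul, ← integral_const_mul,
    ← integral_add ((integrable_integrand hmed hφ p).const_mul 2)
      ((integrable_integrand hmed hψ q).const_mul 2)]
  refine integral_congr_ae (Filter.Eventually.of_forall fun x => ?_)
  simp only []
  have e1 : gradient (fun y => φ y + ψ y) x + (p + q)
      = (gradient φ x + p) + (gradient ψ x + q) := by
    rw [gradient_add' hdφ hdψ]; abel
  have e2 : gradient (fun y => φ y - ψ y) x + (p - q)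
      = (gradient φ x + p) - (gradient ψ x + q) := by
    rw [gradient_sub' hdφ hdψ]; abel
  rw [e1, e2, qf_par]

lemma energy_smul (t : ℝ) {φ : Rn n → ℝ} (hφ : IsTestFun φ) (p : Rn n) :
    energy μ σ (fun x => t * φ x) (t • p) = t ^ 2 * energy μ σ φ p := by
  have hdφ : Differentiable ℝ φ := hφ.1.differentiable (by simp)
  unfold energy
  rw [← integral_const_mul]
  refine integral_congr_ae (Filter.Eventually.of_forall fun x => ?_)
  simp only []
  have e1 : gradient (fun y => t * φ y) x + t • p = t • (gradient φ x + p) := by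
    rw [gradient_const_mul' hdφ, smul_add]
  rw [e1, qf_smul]

open scoped Pointwise

/-! ### Properties of the effective conductance -/

lemma effC_le_energy (hmed : IsMedium μ σ) {φ : Rn n → ℝ} (hφ : IsTestFun φ) (p : Rn n) :
    effC μ σ p ≤ energy μ σ φ p := by
  unfold effC
  refine csInf_le ⟨0, ?_⟩ ⟨φ, hφ, rfl⟩
  rintro c ⟨ψ, hψ, rfl⟩
  exact energy_nonneg hmed ψ p

lemma le_effC (p : Rn n) (a : ℝ) (h : ∀ φ : Rn n → ℝ, IsTestFun φ → a ≤ energy μ σ φ p) :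
    a ≤ effC μ σ p := by
  unfold effC
  refine le_csInf ⟨_, ⟨fun _ => 0, isTestFun_zero, rfl⟩⟩ ?_
  rintro b ⟨φ, hφ, rfl⟩
  exact h φ hφ

lemma effC_nonneg (hmed : IsMedium μ σ) (p : Rn n) : 0 ≤ effC μ σ p :=
  le_effC p 0 fun φ _ => energy_nonneg hmed φ p

lemma effC_le_sq (hmed : IsMedium μ σ) (p : Rn n) :
    effC μ σ p ≤ (n : ℝ) * (μ (unitCube n)).toReal * ‖p‖ ^ 2 :=
  (effC_le_energy hmed isTestFun_zero p).trans (energy_zero_fn_le hmed p)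

lemma effC_zero (hmed : IsMedium μ σ) : effC μ σ (0 : Rn n) = 0 :=
  le_antisymm
    (by simpa [energy_zero_fn_zero] using effC_le_energy hmed isTestFun_zero (0 : Rn n))
    (effC_nonneg hmed 0)

lemma effC_smul (hmed : IsMedium μ σ) (t : ℝ) (p : Rn n) :
    effC μ σ (t • p) = t ^ 2 * effC μ σ p := by
  rcases eq_or_ne t 0 with rfl | ht
  · rw [zero_smul, effC_zero hmed]; ring
  · have hset : {c | ∃ φ : Rn n → ℝ, IsTestFun φ ∧ c = energy μ σ φ (t • p)}
        = (t ^ 2) • {c | ∃ φ : Rn n → ℝ, IsTestFun φ ∧ c = energy μ σ φ p} := by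
      ext c
      constructor
      · rintro ⟨φ, hφ, rfl⟩
        refine Set.mem_smul_set.2
          ⟨energy μ σ (fun x => t⁻¹ * φ x) p, ⟨_, testConstMul hφ t⁻¹, rfl⟩, ?_⟩
        rw [smul_eq_mul, ← energy_smul t (testConstMul hφ t⁻¹) p]
        congr 1
        funext x
        field_simp
      · intro hc
        obtain ⟨b, ⟨ψ, hψ, rfl⟩, rfl⟩ := Set.mem_smul_set.1 hc
        exact ⟨fun x => t * ψ x, testConstMul hψ t,
          by rw [smul_eq_mul, ← energy_smul t hψ p]⟩
    unfold effC
    rw [hset, Real.sInf_smul_of_nonneg (sq_nonneg t), smul_eq_mul]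

lemma effC_neg (hmed : IsMedium μ σ) (p : Rn n) : effC μ σ (-p) = effC μ σ p := by
  have h := effC_smul hmed (-1) p
  rw [neg_one_smul] at h
  simpa using h

lemma effC_par_le (hmed : IsMedium μ σ) (p q : Rn n) :
    effC μ σ (p + q) + effC μ σ (p - q) ≤ 2 * effC μ σ p + 2 * effC μ σ q := by
  have key : ∀ φ ψ : Rn n → ℝ, IsTestFun φ → IsTestFun ψ →
      effC μ σ (p + q) + effC μ σ (p - q)
        ≤ 2 * energy μ σ φ p + 2 * energy μ σ ψ q := by
    intro φ ψ hφ hψ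
    calc effC μ σ (p + q) + effC μ σ (p - q)
        ≤ energy μ σ (fun x => φ x + ψ x) (p + q)
          + energy μ σ (fun x => φ x - ψ x) (p - q) :=
          add_le_add (effC_le_energy hmed (testAdd hφ hψ) _)
            (effC_le_energy hmed (testSub hφ hψ) _)
      _ = 2 * energy μ σ φ p + 2 * energy μ σ ψ q := energy_par hmed hφ hψ p q
  have step1 : ∀ ψ : Rn n → ℝ, IsTestFun ψ →
      effC μ σ (p + q) + effC μ σ (p - q) ≤ 2 * effC μ σ p + 2 * energy μ σ ψ q := by
    intro ψ hψ
    have h := le_effC (μ := μ) (σ := σ) p ((effC μ σ (p + q) + effC μ σ (p - q) - 2 * energy μ σ ψ q) / 2)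
      (fun φ hφ => by linarith [key φ ψ hφ hψ])
    linarith
  have h := le_effC (μ := μ) (σ := σ) q ((effC μ σ (p + q) + effC μ σ (p - q) - 2 * effC μ σ p) / 2)
    (fun ψ hψ => by linarith [step1 ψ hψ])
  linarith

lemma effC_par (hmed : IsMedium μ σ) (p q : Rn n) :
    effC μ σ (p + q) + effC μ σ (p - q) = 2 * effC μ σ p + 2 * effC μ σ q := by
  refine le_antisymm (effC_par_le hmed p q) ?_
  have h := effC_par_le hmed (p + q) (p - q)
  rw [show (p + q) + (p - q) = (2 : ℝ) • p by module,
    show (p + q) - (p - q) = (2 : ℝ) • q by module,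
    effC_smul hmed 2 p, effC_smul hmed 2 q] at h
  norm_num at h
  linarith

/-! ### Additive bounded functions are linear -/

lemma additive_bounded_linear (f : ℝ → ℝ) (hadd : ∀ s t, f (s + t) = f s + f t)
    (M : ℝ) (hb : ∀ t : ℝ, |t| ≤ 1 → |f t| ≤ M) (t : ℝ) : f t = t * f 1 := by
  have hf0 : f 0 = 0 := by have h := hadd 0 0; simp at h; linarith
  have hnat : ∀ (k : ℕ) (s : ℝ), f (k * s) = k * f s := by
    intro k
    induction k with
    | zero => intro s; simp [hf0]
    | succ k ih =>
        intro s
        have e : ((k : ℝ) + 1) * s = (k : ℝ) * s + s := by ring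
        rw [Nat.cast_succ, e, hadd, ih]; ring
  have hneg : ∀ s : ℝ, f (-s) = -f s := by
    intro s
    have h := hadd s (-s)
    simp [hf0] at h
    linarith
  have hint : ∀ (m : ℤ) (s : ℝ), f (m * s) = m * f s := by
    intro m s
    obtain ⟨k, rfl | rfl⟩ := Int.eq_nat_or_neg m
    · push_cast; exact hnat k s
    · push_cast
      rw [neg_mul, hneg, hnat k s]; ring
  set c := f 1 with hc
  have key : ∀ k : ℕ, (k : ℝ) * |f t - t * c| ≤ M + |c| := by
    intro k
    have h1 : f ((k : ℝ) * t) = (k : ℝ) * f t := hnat k t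
    set m : ℤ := ⌊(k : ℝ) * t⌋ with hm
    have hfr0 : 0 ≤ (k : ℝ) * t - m := by
      have := Int.fract_nonneg ((k : ℝ) * t)
      rwa [Int.fract] at this
    have hfr1 : (k : ℝ) * t - m < 1 := by
      have := Int.fract_lt_one ((k : ℝ) * t)
      rwa [Int.fract] at this
    have h2 : f ((k : ℝ) * t) = f ((k : ℝ) * t - m) + f ((m : ℝ) * 1) := by
      rw [← hadd]; congr 1; ring
    have h3 : f ((m : ℝ) * 1) = (m : ℝ) * c := by rw [hint m 1, hc]
    have h5 : (k : ℝ) * f t = f ((k : ℝ) * t - m) + (m : ℝ) * c := by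
      rw [← h1, h2, h3]
    have h4 : (k : ℝ) * (f t - t * c)
        = f ((k : ℝ) * t - m) - ((k : ℝ) * t - m) * c := by
      linear_combination h5
    have habs : |(k : ℝ) * t - m| ≤ 1 := by
      rw [abs_le]; constructor <;> linarith
    calc (k : ℝ) * |f t - t * c| = |(k : ℝ) * (f t - t * c)| := by
          rw [abs_mul, Nat.abs_cast]
      _ = |f ((k : ℝ) * t - m) - ((k : ℝ) * t - m) * c| := by rw [h4]
      _ ≤ |f ((k : ℝ) * t - m)| + |((k : ℝ) * t - m) * c| := abs_sub _ _
      _ ≤ M + |c| := by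
          refine add_le_add (hb _ habs) ?_
          rw [abs_mul]
          calc |(k : ℝ) * t - m| * |c| ≤ 1 * |c| :=
                mul_le_mul_of_nonneg_right habs (abs_nonneg c)
            _ = |c| := one_mul _
  have hzero : |f t - t * c| = 0 := by
    by_contra hne
    have hpos : 0 < |f t - t * c| := lt_of_le_of_ne (abs_nonneg _) (Ne.symm hne)
    obtain ⟨k, hk⟩ := exists_nat_gt ((M + |c|) / |f t - t * c|)
    have hkey := key k
    rw [div_lt_iff₀ hpos] at hk
    linarith
  have := abs_eq_zero.1 hzero
  have := sub_eq_zero.1 this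
  linarith
end S11

/-- The effective conductance `p ↦ C_{μ,σ}(p)` is a positive semidefinite
quadratic form: it is represented by a symmetric bilinear form. -/
theorem statement11 {n : ℕ} (hn : 1 ≤ n) (μ : Measure (Rn n))
    (σ : Rn n → Matrix (Fin n) (Fin n) ℝ) (hmed : IsMedium μ σ) :
    ∃ B : Rn n →ₗ[ℝ] Rn n →ₗ[ℝ] ℝ,
      (∀ p q : Rn n, B p q = B q p) ∧
      (∀ p : Rn n, effC μ σ p = B p p) ∧
      (∀ p : Rn n, 0 ≤ B p p) := by
  classical
  set C : Rn n → ℝ := effC μ σ with hCdef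
  have hC0 : C 0 = 0 := S11.effC_zero hmed
  have hCs : ∀ (t : ℝ) (p : Rn n), C (t • p) = t ^ 2 * C p := fun t p =>
    S11.effC_smul hmed t p
  have hCnn : ∀ p, 0 ≤ C p := fun p => S11.effC_nonneg hmed p
  set K : ℝ := (n : ℝ) * (μ (unitCube n)).toReal with hKdef
  have hK : 0 ≤ K := by
    apply mul_nonneg (Nat.cast_nonneg n) ENNReal.toReal_nonneg
  have hCb : ∀ p, C p ≤ K * ‖p‖ ^ 2 := fun p => S11.effC_le_sq hmed p
  have hpar : ∀ p q, C (p + q) + C (p - q) = 2 * C p + 2 * C q := fun p q =>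
    S11.effC_par hmed p q
  have hCneg : ∀ p, C (-p) = C p := fun p => S11.effC_neg hmed p
  set Bf : Rn n → Rn n → ℝ := fun p q => (C (p + q) - C (p - q)) / 4 with hBf
  have hBsymm : ∀ p q, Bf p q = Bf q p := by
    intro p q
    simp only [hBf]
    rw [show q + p = p + q from add_comm q p, show q - p = -(p - q) by abel, hCneg]
  have hBdiag : ∀ p, Bf p p = C p := by
    intro p
    simp only [hBf]
    rw [show p + p = (2 : ℝ) • p from (two_smul ℝ p).symm, sub_self, hCs, hC0]
    norm_num
  have hBzero : ∀ q, Bf 0 q = 0 := by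
    intro q
    simp only [hBf]
    rw [zero_add, zero_sub, hCneg]
    ring
  have hhalf : ∀ x y z, Bf x z + Bf y z = 2 * Bf ((1 / 2 : ℝ) • (x + y)) z := by
    intro x y z
    have e1 : C (x + z) + C (y + z)
        = 2 * C ((1 / 2 : ℝ) • (x + y) + z) + 2 * C ((1 / 2 : ℝ) • (x - y)) := by
      have h := hpar ((1 / 2 : ℝ) • (x + y) + z) ((1 / 2 : ℝ) • (x - y))
      rw [show ((1 / 2 : ℝ) • (x + y) + z) + ((1 / 2 : ℝ) • (x - y)) = x + z by module,
        show ((1 / 2 : ℝ) • (x + y) + z) - ((1 / 2 : ℝ) • (x - y)) = y + z by module] at h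
      linarith
    have e2 : C (x - z) + C (y - z)
        = 2 * C ((1 / 2 : ℝ) • (x + y) - z) + 2 * C ((1 / 2 : ℝ) • (x - y)) := by
      have h := hpar ((1 / 2 : ℝ) • (x + y) - z) ((1 / 2 : ℝ) • (x - y))
      rw [show ((1 / 2 : ℝ) • (x + y) - z) + ((1 / 2 : ℝ) • (x - y)) = x - z by module,
        show ((1 / 2 : ℝ) • (x + y) - z) - ((1 / 2 : ℝ) • (x - y)) = y - z by module] at h
      linarith
    simp only [hBf]
    linarith
  have hdouble : ∀ w z, Bf w z = 2 * Bf ((1 / 2 : ℝ) • w) z := by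
    intro w z
    have h := hhalf w 0 z
    rw [hBzero, add_zero, add_zero] at h
    exact h
  have hBadd : ∀ x y z, Bf (x + y) z = Bf x z + Bf y z := by
    intro x y z
    rw [hhalf x y z, ← hdouble (x + y) z]
  have hBsmul : ∀ (t : ℝ) (x z : Rn n), Bf (t • x) z = t * Bf x z := by
    intro t x z
    have hfadd : ∀ s u : ℝ, Bf ((s + u) • x) z = Bf (s • x) z + Bf (u • x) z := by
      intro s u
      rw [add_smul, hBadd]
    have hfb : ∀ s : ℝ, |s| ≤ 1 → |Bf (s • x) z| ≤ K * (‖x‖ + ‖z‖) ^ 2 / 2 := by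
      intro s hs
      have hb1 : ‖s • x + z‖ ≤ ‖x‖ + ‖z‖ := by
        calc ‖s • x + z‖ ≤ ‖s • x‖ + ‖z‖ := norm_add_le _ _
          _ ≤ ‖x‖ + ‖z‖ := by
              rw [norm_smul, Real.norm_eq_abs]
              have := norm_nonneg x
              nlinarith
      have hb2 : ‖s • x - z‖ ≤ ‖x‖ + ‖z‖ := by
        calc ‖s • x - z‖ ≤ ‖s • x‖ + ‖z‖ := norm_sub_le _ _
          _ ≤ ‖x‖ + ‖z‖ := by
              rw [norm_smul, Real.norm_eq_abs]
              have := norm_nonneg x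
              nlinarith
      have h1 : C (s • x + z) ≤ K * (‖x‖ + ‖z‖) ^ 2 :=
        (hCb _).trans (mul_le_mul_of_nonneg_left
          (pow_le_pow_left₀ (norm_nonneg _) hb1 2) hK)
      have h2 : C (s • x - z) ≤ K * (‖x‖ + ‖z‖) ^ 2 :=
        (hCb _).trans (mul_le_mul_of_nonneg_left
          (pow_le_pow_left₀ (norm_nonneg _) hb2 2) hK)
      have hn1 := hCnn (s • x + z)
      have hn2 := hCnn (s • x - z)
      rw [abs_le]
      constructor <;> simp only [hBf] <;> [linarith; linarith]
    have hlin := S11.additive_bounded_linear (fun s => Bf (s • x) z) hfadd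
      (K * (‖x‖ + ‖z‖) ^ 2 / 2) hfb t
    simpa [one_smul] using hlin
  refine ⟨LinearMap.mk₂ ℝ Bf hBadd (fun c m₂ n₂ => by rw [hBsmul, smul_eq_mul])
    (fun m₂ n₁ n₂ => by rw [hBsymm m₂, hBadd, hBsymm n₁ m₂, hBsymm n₂ m₂])
    (fun c m₂ n₂ => by rw [hBsymm m₂, hBsmul, hBsymm n₂ m₂, smul_eq_mul]), ?_, ?_, ?_⟩
  · intro p q
    simp only [LinearMap.mk₂_apply]
    exact hBsymm p q
  · intro p
    simp only [LinearMap.mk₂_apply]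
    exact (hBdiag p).symm
  · intro p
    simp only [LinearMap.mk₂_apply]
    rw [hBdiag p]
    exact hCnn p
end
end

section
/- Let (μ_i, σ_i), i ∈ ℕ, be a sequence of media with Σ_i μ_i([0,1)^n) < ∞. For a test function φ and p ∈ ℝ^n write E_i(φ,p) := ∫_{[0,1)^n} (∇φ(x)+p)·σ_i(x)(∇φ(x)+p) dμ_i(x), and define the combined effective conductance C_∞(p) := inf over all test functions φ of Σ_i E_i(φ,p). Then C_∞(p) ≥ Σ_i C_{μ_i,σ_i}(p) for every p ∈ ℝ^n (superadditivity). Moreover, if every medium (μ_i, σ_i) is maximal, then equality holds and C_∞(p) = Σ_i ∫_{[0,1)^n} p·σ_i(x)p dμ_i(x) for every p ∈ ℝ^n. -/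
open MeasureTheory Filter Topology
open scoped RealInnerProductSpace

noncomputable section

open Matrix in
lemma qf_eq_dot {n : ℕ} (A : Matrix (Fin n) (Fin n) ℝ) (v : Rn n) :
    qf A v = (v : Fin n → ℝ) ⬝ᵥ A.mulVec v := by
  simp [qf, dotProduct, Matrix.mulVec, Finset.mul_sum, mul_assoc]

lemma qf_nonneg {n : ℕ} {A : Matrix (Fin n) (Fin n) ℝ} (hA : A.PosSemidef) (v : Rn n) :
    0 ≤ qf A v := by
  rw [qf_eq_dot]
  simpa using hA.dotProduct_mulVec_nonneg v.ofLp

open Matrix in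
lemma entry_abs_le {n : ℕ} {A : Matrix (Fin n) (Fin n) ℝ} (hA : A.PosSemidef)
    (hs : A.IsSymm) (ht : A.trace = 1) (i j : Fin n) : |A i j| ≤ 1 := by
  have hdiag : ∀ k, 0 ≤ A k k := by
    intro k
    have := hA.dotProduct_mulVec_nonneg (Pi.single k 1)
    simpa [Matrix.mulVec_single, dotProduct_single] using this
  have hdle : ∀ k, A k k ≤ 1 := by
    intro k
    rw [← ht]
    exact Finset.single_le_sum (fun l _ => hdiag l) (Finset.mem_univ k)
  have hsymm : A j i = A i j := by
    have := congrFun (congrFun hs.symm i) j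
    simpa [Matrix.transpose_apply] using this.symm
  have key : ∀ c : ℝ, 0 ≤ A i i + c * (2 * A i j) + c^2 * A j j := by
    intro c
    have := hA.dotProduct_mulVec_nonneg ((Pi.single i 1 : Fin n → ℝ) + c • (Pi.single j 1 : Fin n → ℝ))
    simp only [star_trivial, Matrix.mulVec_add, Matrix.mulVec_smul,
      Matrix.mulVec_single, dotProduct_add, add_dotProduct, smul_dotProduct,
      dotProduct_smul, single_dotProduct, smul_eq_mul, Pi.add_apply, Pi.smul_apply,
      Pi.single_apply, mul_one, Matrix.col_apply, MulOpposite.op_one, one_smul, one_mul] at this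
    rw [hsymm] at this
    nlinarith [this]
  have h1 := key 1
  have h2 := key (-1)
  have hii := hdle i
  have hjj := hdle j
  rw [abs_le]
  constructor <;> nlinarith [hdiag i, hdiag j]

lemma qf_le {n : ℕ} {A : Matrix (Fin n) (Fin n) ℝ} (hA : A.PosSemidef)
    (hs : A.IsSymm) (ht : A.trace = 1) (v : Rn n) :
    qf A v ≤ (n : ℝ) * ‖v‖ ^ 2 := by
  have h1 : qf A v ≤ ∑ i, ∑ j, |v i| * |v j| := by
    refine Finset.sum_le_sum fun i _ => Finset.sum_le_sum fun j _ => ?_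
    calc v i * A i j * v j ≤ |v i * A i j * v j| := le_abs_self _
      _ = |v i| * |A i j| * |v j| := by rw [abs_mul, abs_mul]
      _ ≤ |v i| * 1 * |v j| := by
          exact mul_le_mul_of_nonneg_right
            (mul_le_mul_of_nonneg_left (entry_abs_le hA hs ht i j) (abs_nonneg _))
            (abs_nonneg _)
      _ = |v i| * |v j| := by ring
  have h2 : ∑ i, ∑ j, |v i| * |v j| = (∑ i, |v i|) ^ 2 := by
    rw [sq, Finset.sum_mul_sum]
  have h3 : (∑ i, |v i|) ^ 2 ≤ (n : ℝ) * ∑ i, |v i| ^ 2 := by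
    have := sq_sum_le_card_mul_sum_sq (s := Finset.univ) (f := fun i : Fin n => |v i|)
    simpa using this
  have h4 : (∑ i, |v i| ^ 2) = ‖v‖ ^ 2 := by
    rw [EuclideanSpace.norm_eq, Real.sq_sqrt (by positivity)]
    simp [sq_abs, Real.norm_eq_abs]
  linarith [h2 ▸ h1, h4 ▸ h3]

lemma unitCube_measurable (n : ℕ) : MeasurableSet (unitCube n) := by
  have : unitCube n = ⋂ i, (fun x : Rn n => x i) ⁻¹' (Set.Ico 0 1) := by
    ext x; simp [unitCube]
  rw [this]
  exact MeasurableSet.iInter fun i =>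
    ((measurable_pi_apply i).comp (WithLp.measurable_ofLp 2 _)) measurableSet_Ico

lemma grad_bound {n : ℕ} {φ : Rn n → ℝ} (hφ : ContDiff ℝ (⊤ : ℕ∞) φ) (p : Rn n) :
    ∃ M : ℝ, 0 ≤ M ∧ ∀ x ∈ unitCube n, ‖gradient φ x + p‖ ^ 2 ≤ M := by
  have hgrad : Continuous fun x : Rn n => gradient φ x :=
    (InnerProductSpace.toDual ℝ (Rn n)).symm.continuous.comp
      (hφ.continuous_fderiv (by simp))
  have hcont : Continuous fun x : Rn n => ‖gradient φ x + p‖ ^ 2 :=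
    ((hgrad.add continuous_const).norm.pow 2)
  have hK : IsCompact (Metric.closedBall (0 : Rn n) n) := isCompact_closedBall _ _
  obtain ⟨C, hC⟩ := hK.exists_bound_of_continuousOn hcont.continuousOn
  refine ⟨max C 0, le_max_right _ _, fun x hx => ?_⟩
  have hxball : x ∈ Metric.closedBall (0 : Rn n) n := by
    rw [Metric.mem_closedBall, dist_zero_right]
    have hnorm : ‖x‖ ≤ Real.sqrt n := by
      rw [EuclideanSpace.norm_eq]
      apply Real.sqrt_le_sqrt
      calc (∑ i, ‖x i‖ ^ 2) ≤ ∑ _i : Fin n, (1 : ℝ) := by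
            refine Finset.sum_le_sum fun i _ => ?_
            have h1 := (hx i).1
            have h2 := (hx i).2
            rw [Real.norm_eq_abs, sq_abs]
            nlinarith
        _ = n := by simp
    calc ‖x‖ ≤ Real.sqrt n := hnorm
      _ ≤ Real.sqrt ((n : ℝ)^2) := Real.sqrt_le_sqrt
          (by exact_mod_cast Nat.le_self_pow two_ne_zero n)
      _ = n := Real.sqrt_sq (Nat.cast_nonneg n)
  calc ‖gradient φ x + p‖ ^ 2 ≤ ‖(‖gradient φ x + p‖ ^ 2)‖ := le_abs_self _
    _ ≤ C := hC x hxball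
    _ ≤ max C 0 := le_max_left _ _

lemma energy_nonneg {n : ℕ} {μ : Measure (Rn n)} {σ : Rn n → Matrix (Fin n) (Fin n) ℝ}
    (hm : IsMedium μ σ) (φ : Rn n → ℝ) (p : Rn n) : 0 ≤ energy μ σ φ p := by
  apply integral_nonneg_of_ae
  filter_upwards [ae_restrict_of_ae hm.posSemidef] with x hx
  exact qf_nonneg hx _

lemma energy_le {n : ℕ} {μ : Measure (Rn n)} {σ : Rn n → Matrix (Fin n) (Fin n) ℝ}
    (hm : IsMedium μ σ) {φ : Rn n → ℝ} (p : Rn n) {M : ℝ}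
    (hM : ∀ x ∈ unitCube n, ‖gradient φ x + p‖ ^ 2 ≤ M) :
    energy μ σ φ p ≤ ((n : ℝ) * M) * (μ (unitCube n)).toReal := by
  have hb : ‖∫ x in unitCube n, qf (σ x) (gradient φ x + p) ∂μ‖ ≤
      ((n : ℝ) * M) * (μ (unitCube n)).toReal := by
    apply norm_setIntegral_le_of_norm_le_const_ae hm.finiteCube
    filter_upwards [ae_restrict_of_ae hm.posSemidef, ae_restrict_of_ae hm.traceOne,
      ae_restrict_mem (unitCube_measurable n)] with x h1 h2 h3
    rw [Real.norm_eq_abs, abs_of_nonneg (qf_nonneg h1 _)]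
    calc qf (σ x) (gradient φ x + p) ≤ (n : ℝ) * ‖gradient φ x + p‖ ^ 2 :=
          qf_le h1 (hm.symm x) h2 _
      _ ≤ (n : ℝ) * M := mul_le_mul_of_nonneg_left (hM x h3) (Nat.cast_nonneg n)
  calc energy μ σ φ p ≤ ‖energy μ σ φ p‖ := le_abs_self _
    _ ≤ _ := hb

lemma zero_testFun {n : ℕ} : IsTestFun (fun _ : Rn n => (0 : ℝ)) :=
  ⟨contDiff_const, fun _ _ => rfl⟩

lemma energy_zero_fun {n : ℕ} (μ : Measure (Rn n)) (σ : Rn n → Matrix (Fin n) (Fin n) ℝ)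
    (p : Rn n) : energy μ σ (fun _ => 0) p = ∫ x in unitCube n, qf (σ x) p ∂μ := by
  unfold energy
  congr 1
  ext x
  rw [gradient_fun_const, zero_add]


/-- Superadditivity of effective conductance for countable sums of media,
with equality (and the value equal to the total Wiener upper bound) when every summand is
maximal. -/
theorem statement13 {n : ℕ} (hn : 1 ≤ n)
    (μ : ℕ → Measure (Rn n)) (σ : ℕ → Rn n → Matrix (Fin n) (Fin n) ℝ)
    (hmed : ∀ i, IsMedium (μ i) (σ i))
    (hfin : (∑' i, μ i (unitCube n)) < ⊤) :
    (∀ p : Rn n,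
      (∑' i, effC (μ i) (σ i) p) ≤
        sInf {c | ∃ φ : Rn n → ℝ, IsTestFun φ ∧ c = ∑' i, energy (μ i) (σ i) φ p}) ∧
    ((∀ i, IsMaximal (μ i) (σ i)) →
      ∀ p : Rn n,
        sInf {c | ∃ φ : Rn n → ℝ, IsTestFun φ ∧ c = ∑' i, energy (μ i) (σ i) φ p} =
          (∑' i, effC (μ i) (σ i) p) ∧
        sInf {c | ∃ φ : Rn n → ℝ, IsTestFun φ ∧ c = ∑' i, energy (μ i) (σ i) φ p} =
          ∑' i, ∫ x in unitCube n, qf (σ i x) p ∂(μ i)) := by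
  -- Preliminary facts
  have hμfin : ∀ i, (μ i) (unitCube n) ≠ ⊤ := fun i =>
    (ne_of_lt (lt_of_le_of_lt (ENNReal.le_tsum i) hfin))
  have hμsum : Summable fun i => ((μ i) (unitCube n)).toReal :=
    ENNReal.summable_toReal hfin.ne
  -- summability of energies for any test function
  have hEsum : ∀ (φ : Rn n → ℝ), IsTestFun φ → ∀ p : Rn n,
      Summable fun i => energy (μ i) (σ i) φ p := by
    intro φ hφ p
    obtain ⟨M, hM0, hM⟩ := grad_bound hφ.1 p
    refine Summable.of_nonneg_of_le (fun i => energy_nonneg (hmed i) φ p)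
      (fun i => energy_le (hmed i) p hM) ?_
    exact hμsum.mul_left _
  -- effC is at most any energy
  have heffC_le : ∀ (i : ℕ) (φ : Rn n → ℝ), IsTestFun φ → ∀ p : Rn n,
      effC (μ i) (σ i) p ≤ energy (μ i) (σ i) φ p := by
    intro i φ hφ p
    apply csInf_le
    · exact ⟨0, fun c ⟨ψ, hψ, hc⟩ => hc ▸ energy_nonneg (hmed i) ψ p⟩
    · exact ⟨φ, hφ, rfl⟩
  have heffC_nonneg : ∀ (i : ℕ) (p : Rn n), 0 ≤ effC (μ i) (σ i) p := by
    intro i p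
    refine le_csInf ⟨energy (μ i) (σ i) (fun _ => 0) p, ⟨_, zero_testFun, rfl⟩⟩ ?_
    rintro c ⟨ψ, hψ, rfl⟩
    exact energy_nonneg (hmed i) ψ p
  have heffCsum : ∀ p : Rn n, Summable fun i => effC (μ i) (σ i) p := by
    intro p
    exact Summable.of_nonneg_of_le (fun i => heffC_nonneg i p)
      (fun i => heffC_le i _ zero_testFun p) (hEsum _ zero_testFun p)
  -- Part 1
  have part1 : ∀ p : Rn n,
      (∑' i, effC (μ i) (σ i) p) ≤
        sInf {c | ∃ φ : Rn n → ℝ, IsTestFun φ ∧ c = ∑' i, energy (μ i) (σ i) φ p} := by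
    intro p
    refine le_csInf ⟨∑' i, energy (μ i) (σ i) (fun _ => 0) p, ⟨_, zero_testFun, rfl⟩⟩ ?_
    rintro c ⟨φ, hφ, rfl⟩
    exact Summable.tsum_le_tsum (fun i => heffC_le i φ hφ p) (heffCsum p) (hEsum φ hφ p)
  refine ⟨part1, fun hmax p => ?_⟩
  -- Upper bound via the zero test function
  have hub : sInf {c | ∃ φ : Rn n → ℝ, IsTestFun φ ∧ c = ∑' i, energy (μ i) (σ i) φ p} ≤
      ∑' i, effC (μ i) (σ i) p := by
    have hmem : (∑' i, energy (μ i) (σ i) (fun _ => 0) p) ∈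
        {c | ∃ φ : Rn n → ℝ, IsTestFun φ ∧ c = ∑' i, energy (μ i) (σ i) φ p} :=
      ⟨_, zero_testFun, rfl⟩
    have hbdd : BddBelow {c | ∃ φ : Rn n → ℝ, IsTestFun φ ∧
        c = ∑' i, energy (μ i) (σ i) φ p} := by
      refine ⟨0, ?_⟩
      rintro c ⟨ψ, hψ, rfl⟩
      exact tsum_nonneg fun i => energy_nonneg (hmed i) ψ p
    have heq : (∑' i, energy (μ i) (σ i) (fun _ => 0) p) = ∑' i, effC (μ i) (σ i) p := by
      apply tsum_congr
      intro i
      rw [energy_zero_fun, ← hmax i p]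
    exact heq ▸ csInf_le hbdd hmem
  have h1 : sInf {c | ∃ φ : Rn n → ℝ, IsTestFun φ ∧ c = ∑' i, energy (μ i) (σ i) φ p} =
      ∑' i, effC (μ i) (σ i) p := le_antisymm hub (part1 p)
  refine ⟨h1, ?_⟩
  rw [h1]
  exact tsum_congr fun i => hmax i p
end
end
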